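/- arXiv:2210.12411 — 3 statements merged into one kernel-verified Lean document; each statement's English description precedes it below -/
import Mathlib

section
/- Let n ∈ ℕ and let c : {0,…,n−1} → Bool. Let w be the finite word of length n + 12 obtained by prefixing c with 100110 and suffixing it with 011001 (with 1 = true, 0 = false). Then c, extended by zeros, is a maximal Riviera configuration of length n if and only if w contains none of the words 111, 000, 0100, 0010 as a contiguous factor (where the factor must lie entirely inside w; no padding of w is used). -/
/-- A Riviera configuration of length `n`: zero-padded outside `{0, …, n−1}`. -/
def RivieraConfig (n : ℕ) (c : ℤ → Bool) : Prop :=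
  ∀ j : ℤ, j < 0 ∨ (n : ℤ) ≤ j → c j = false

/-- Permissibility: no occupied lot has both neighbors occupied. -/
def RivieraPermissible (c : ℤ → Bool) : Prop :=
  ¬ ∃ i : ℤ, c (i - 1) = true ∧ c i = true ∧ c (i + 1) = true

/-- Maximality: permissible and no house can be added. -/
def RivieraMaximal (n : ℕ) (c : ℤ → Bool) : Prop :=
  RivieraPermissible c ∧
    ∀ j : ℤ, 0 ≤ j → j < (n : ℤ) → c j = false →
      ¬ RivieraPermissible (Function.update c j true)

/-- The word of length `n + 12` obtained from a configuration of length `n`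
by prefixing `100110` and suffixing `011001` (`1 = true`, `0 = false`). -/
def paddedWord (n : ℕ) (c : ℤ → Bool) : List Bool :=
  [true, false, false, true, true, false] ++
    (List.ofFn fun i : Fin n => c ((i : ℕ) : ℤ)) ++
    [false, true, true, false, false, true]

/- ### Auxiliary definitions and lemmas -/

lemma infix_iff_getD (v w : List Bool) :
    v <:+: w ↔ ∃ t, t + v.length ≤ w.length ∧
      ∀ s, s < v.length → w.getD (t + s) false = v.getD s false := by
  constructor
  · rintro ⟨x, y, rfl⟩
    refine ⟨x.length, by simp, fun s hs => ?_⟩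
    have h1 : x.length + s < (x ++ v ++ y).length := by simp; omega
    rw [List.getD_eq_getElem _ _ h1, List.getD_eq_getElem _ _ hs]
    rw [List.getElem_append_left (by simp; omega), List.getElem_append_right (by omega)]
    congr 1
    omega
  · rintro ⟨t, hle, h⟩
    have hv : v = (w.drop t).take v.length := by
      apply List.ext_getElem (by simp; omega)
      intro i h1 h2
      rw [List.getElem_take, List.getElem_drop]
      have := h i h1
      rwa [List.getD_eq_getElem _ _ (by omega), List.getD_eq_getElem _ _ h1, eq_comm] at this
    rw [hv]
    exact ((w.drop t).take_prefix v.length).isInfix.trans (w.drop_suffix t).isInfix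

/-- The letters of the padded word, as a function of the index. -/
def Gword (n : ℕ) (c : ℤ → Bool) (k : ℕ) : Bool :=
  if k < 6 then [true, false, false, true, true, false].getD k false
  else if k < n + 6 then c ((k : ℤ) - 6)
  else [false, true, true, false, false, true].getD (k - (n + 6)) false

lemma length_paddedWord (n : ℕ) (c : ℤ → Bool) : (paddedWord n c).length = n + 12 := by
  simp [paddedWord]

lemma getD_paddedWord (n : ℕ) (c : ℤ → Bool) (k : ℕ) :
    (paddedWord n c).getD k false = Gword n c k := by
  unfold paddedWord Gword
  rw [List.append_assoc]
  by_cases h1 : k < 6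
  · rw [List.getD_append _ _ _ _ (by simpa), if_pos h1]
  · rw [List.getD_append_right _ _ _ _ (by simp; omega)]
    simp only [List.length_cons, List.length_nil, if_neg h1]
    by_cases h2 : k < n + 6
    · rw [List.getD_append _ _ _ _ (by simp; omega), if_pos h2]
      rw [List.getD_eq_getElem _ _ (by simp; omega), List.getElem_ofFn]
      congr 1
      push_cast
      omega
    · rw [List.getD_append_right _ _ _ _ (by simp; omega), if_neg h2]
      congr 1
      simp
      omega

lemma Gword_pre_true {n : ℕ} {c : ℤ → Bool} {k : ℕ} (h : k = 0 ∨ k = 3 ∨ k = 4) :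
    Gword n c k = true := by
  rcases h with rfl | rfl | rfl <;> simp [Gword]

lemma Gword_pre_false {n : ℕ} {c : ℤ → Bool} {k : ℕ} (h : k = 1 ∨ k = 2 ∨ k = 5) :
    Gword n c k = false := by
  rcases h with rfl | rfl | rfl <;> simp [Gword]

lemma Gword_suf_true {n : ℕ} {c : ℤ → Bool} {k : ℕ} (h : k = n + 7 ∨ k = n + 8 ∨ k = n + 11) :
    Gword n c k = true := by
  unfold Gword
  rcases h with rfl | rfl | rfl
  · rw [if_neg (by omega), if_neg (by omega), show n + 7 - (n + 6) = 1 by omega]; rfl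
  · rw [if_neg (by omega), if_neg (by omega), show n + 8 - (n + 6) = 2 by omega]; rfl
  · rw [if_neg (by omega), if_neg (by omega), show n + 11 - (n + 6) = 5 by omega]; rfl

lemma Gword_suf_false {n : ℕ} {c : ℤ → Bool} {k : ℕ} (h : k = n + 6 ∨ k = n + 9 ∨ k = n + 10) :
    Gword n c k = false := by
  unfold Gword
  rcases h with rfl | rfl | rfl
  · rw [if_neg (by omega), if_neg (by omega), show n + 6 - (n + 6) = 0 by omega]; rfl
  · rw [if_neg (by omega), if_neg (by omega), show n + 9 - (n + 6) = 3 by omega]; rfl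
  · rw [if_neg (by omega), if_neg (by omega), show n + 10 - (n + 6) = 4 by omega]; rfl

lemma Gword_zone {n : ℕ} {c : ℤ → Bool} (hc : RivieraConfig n c) {k : ℕ}
    (h5 : 5 ≤ k) (h6 : k ≤ n + 6) : Gword n c k = c ((k : ℤ) - 6) := by
  unfold Gword
  by_cases e1 : k < 6
  · have : k = 5 := by omega
    subst this
    rw [hc _ (Or.inl (by norm_num))]
    rfl
  · rw [if_neg e1]
    by_cases e2 : k < n + 6
    · rw [if_pos e2]
    · have : k = n + 6 := by omega
      subst this
      rw [if_neg e2, hc _ (Or.inr (by push_cast; omega)), show n + 6 - (n + 6) = 0 by omega]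
      rfl

lemma infix3_iff (n : ℕ) (c : ℤ → Bool) (a b d : Bool) :
    [a, b, d] <:+: paddedWord n c ↔
      ∃ t, t + 3 ≤ n + 12 ∧ Gword n c t = a ∧ Gword n c (t + 1) = b ∧ Gword n c (t + 2) = d := by
  rw [infix_iff_getD]
  constructor
  · rintro ⟨t, hl, h⟩
    rw [length_paddedWord] at hl
    refine ⟨t, by simpa using hl, ?_, ?_, ?_⟩
    · have := h 0 (by norm_num); rw [getD_paddedWord] at this; simpa using this
    · have := h 1 (by norm_num); rw [getD_paddedWord] at this; simpa using this
    · have := h 2 (by norm_num); rw [getD_paddedWord] at this; simpa using this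
  · rintro ⟨t, hl, h0, h1, h2⟩
    refine ⟨t, by rw [length_paddedWord]; simpa using hl, fun s hs => ?_⟩
    rw [getD_paddedWord]
    have hs' : s = 0 ∨ s = 1 ∨ s = 2 := by simp at hs; omega
    rcases hs' with rfl | rfl | rfl
    · simpa using h0
    · simpa using h1
    · simpa using h2

lemma infix4_iff (n : ℕ) (c : ℤ → Bool) (a b d e : Bool) :
    [a, b, d, e] <:+: paddedWord n c ↔
      ∃ t, t + 4 ≤ n + 12 ∧ Gword n c t = a ∧ Gword n c (t + 1) = b ∧
        Gword n c (t + 2) = d ∧ Gword n c (t + 3) = e := by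
  rw [infix_iff_getD]
  constructor
  · rintro ⟨t, hl, h⟩
    rw [length_paddedWord] at hl
    refine ⟨t, by simpa using hl, ?_, ?_, ?_, ?_⟩
    · have := h 0 (by norm_num); rw [getD_paddedWord] at this; simpa using this
    · have := h 1 (by norm_num); rw [getD_paddedWord] at this; simpa using this
    · have := h 2 (by norm_num); rw [getD_paddedWord] at this; simpa using this
    · have := h 3 (by norm_num); rw [getD_paddedWord] at this; simpa using this
  · rintro ⟨t, hl, h0, h1, h2, h3⟩
    refine ⟨t, by rw [length_paddedWord]; simpa using hl, fun s hs => ?_⟩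
    rw [getD_paddedWord]
    have hs' : s = 0 ∨ s = 1 ∨ s = 2 ∨ s = 3 := by simp at hs; omega
    rcases hs' with rfl | rfl | rfl | rfl
    · simpa using h0
    · simpa using h1
    · simpa using h2
    · simpa using h3

/-- A vacant lot `j` is blocked: adding a house there would create three in a row. -/
def Blocked (c : ℤ → Bool) (j : ℤ) : Prop :=
  (c (j - 2) = true ∧ c (j - 1) = true) ∨ (c (j - 1) = true ∧ c (j + 1) = true) ∨
    (c (j + 1) = true ∧ c (j + 2) = true)

lemma blocked_of_not_perm (c : ℤ → Bool) (j : ℤ)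
    (hperm : RivieraPermissible c)
    (h : ¬ RivieraPermissible (Function.update c j true)) : Blocked c j := by
  rw [RivieraPermissible, not_not] at h
  obtain ⟨i, h1, h2, h3⟩ := h
  rcases eq_or_ne (i - 1) j with e | e1
  · right; right
    constructor
    · rw [Function.update_apply, if_neg (by omega)] at h2; rw [show j+1 = i by omega]; exact h2
    · rw [Function.update_apply, if_neg (by omega)] at h3; rw [show j+2 = i+1 by omega]; exact h3
  rcases eq_or_ne i j with e | e2
  · right; left
    constructor
    · rw [Function.update_apply, if_neg (by omega)] at h1; rw [show j-1 = i-1 by omega]; exact h1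
    · rw [Function.update_apply, if_neg (by omega)] at h3; rw [show j+1 = i+1 by omega]; exact h3
  rcases eq_or_ne (i + 1) j with e | e3
  · left
    constructor
    · rw [Function.update_apply, if_neg (by omega)] at h1; rw [show j-2 = i-1 by omega]; exact h1
    · rw [Function.update_apply, if_neg (by omega)] at h2; rw [show j-1 = i by omega]; exact h2
  · exfalso
    apply hperm
    refine ⟨i, ?_, ?_, ?_⟩ <;>
      [rw [Function.update_apply, if_neg e1] at h1; rw [Function.update_apply, if_neg e2] at h2;
        rw [Function.update_apply, if_neg e3] at h3] <;> assumption

lemma not_perm_of_blocked (c : ℤ → Bool) (j : ℤ) (h : Blocked c j) :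
    ¬ RivieraPermissible (Function.update c j true) := by
  rw [RivieraPermissible, not_not]
  rcases h with ⟨h1, h2⟩ | ⟨h1, h2⟩ | ⟨h1, h2⟩
  · refine ⟨j - 1, ?_, ?_, ?_⟩
    · rw [Function.update_apply, if_neg (by omega), show j-1-1 = j-2 by ring]; exact h1
    · rw [Function.update_apply, if_neg (by omega)]; exact h2
    · rw [show j-1+1 = j by ring, Function.update_self]
  · refine ⟨j, ?_, ?_, ?_⟩
    · rw [Function.update_apply, if_neg (by omega)]; exact h1
    · rw [Function.update_self]
    · rw [Function.update_apply, if_neg (by omega)]; exact h2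
  · refine ⟨j + 1, ?_, ?_, ?_⟩
    · rw [show j+1-1 = j by ring, Function.update_self]
    · rw [Function.update_apply, if_neg (by omega)]; exact h1
    · rw [Function.update_apply, if_neg (by omega), show j+1+1 = j+2 by ring]; exact h2

lemma permissible_iff_noA {n : ℕ} {c : ℤ → Bool} (hc : RivieraConfig n c) :
    RivieraPermissible c ↔
      ¬ ∃ t, t + 3 ≤ n + 12 ∧ Gword n c t = true ∧ Gword n c (t + 1) = true ∧
        Gword n c (t + 2) = true := by
  constructor
  · rintro hperm ⟨t, htl, h0, h1, h2⟩
    by_cases hA : t ≤ 4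
    · have ht : t = 0 ∨ t = 1 ∨ t = 2 ∨ t = 3 ∨ t = 4 := by omega
      rcases ht with rfl | rfl | rfl | rfl | rfl
      · rw [Gword_pre_false (by omega)] at h1; simp at h1
      · rw [Gword_pre_false (by omega)] at h0; simp at h0
      · rw [Gword_pre_false (by omega)] at h0; simp at h0
      · rw [Gword_pre_false (by omega)] at h2; simp at h2
      · rw [Gword_pre_false (by omega)] at h1; simp at h1
    by_cases hB : n + 5 ≤ t
    · have ht : t = n+5 ∨ t = n+6 ∨ t = n+7 ∨ t = n+8 ∨ t = n+9 := by omega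
      rcases ht with rfl | rfl | rfl | rfl | rfl
      · rw [Gword_suf_false (by omega)] at h1; simp at h1
      · rw [Gword_suf_false (by omega)] at h0; simp at h0
      · rw [Gword_suf_false (by omega)] at h2; simp at h2
      · rw [Gword_suf_false (by omega)] at h1; simp at h1
      · rw [Gword_suf_false (by omega)] at h0; simp at h0
    · rw [Gword_zone hc (by omega) (by omega)] at h0
      rw [Gword_zone hc (by omega) (by omega)] at h1
      rw [Gword_zone hc (by omega) (by omega)] at h2
      refine hperm ⟨(t : ℤ) - 5, ?_, ?_, ?_⟩
      · rw [show (t:ℤ) - 5 - 1 = (t:ℤ) - 6 by ring]; exact h0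
      · rw [show (t:ℤ) - 5 = (↑(t+1):ℤ) - 6 by push_cast; ring]; exact h1
      · rw [show (t:ℤ) - 5 + 1 = (↑(t+2):ℤ) - 6 by push_cast; ring]; exact h2
  · intro hnoA
    rintro ⟨i, h1, h2, h3⟩
    have hi1 : 0 ≤ i - 1 := by
      by_contra hcon
      rw [hc _ (Or.inl (by omega))] at h1
      simp at h1
    have hi2 : i + 1 < n := by
      by_contra hcon
      rw [hc _ (Or.inr (by omega))] at h3
      simp at h3
    refine hnoA ⟨(i + 5).toNat, by omega, ?_, ?_, ?_⟩
    · rw [Gword_zone hc (by omega) (by omega), show ((((i+5).toNat : ℕ)) : ℤ) - 6 = i - 1 by omega]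
      exact h1
    · rw [Gword_zone hc (by omega) (by omega), show (((((i+5).toNat + 1 : ℕ))) : ℤ) - 6 = i by push_cast; omega]
      exact h2
    · rw [Gword_zone hc (by omega) (by omega), show (((((i+5).toNat + 2 : ℕ))) : ℤ) - 6 = i + 1 by push_cast; omega]
      exact h3

lemma blocked_iff_noBCD {n : ℕ} {c : ℤ → Bool} (hc : RivieraConfig n c) :
    (∀ j : ℤ, 0 ≤ j → j < (n : ℤ) → c j = false → Blocked c j) ↔
      ((¬ ∃ t, t + 3 ≤ n + 12 ∧ Gword n c t = false ∧ Gword n c (t + 1) = false ∧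
          Gword n c (t + 2) = false) ∧
       (¬ ∃ t, t + 4 ≤ n + 12 ∧ Gword n c t = false ∧ Gword n c (t + 1) = true ∧
          Gword n c (t + 2) = false ∧ Gword n c (t + 3) = false) ∧
       (¬ ∃ t, t + 4 ≤ n + 12 ∧ Gword n c t = false ∧ Gword n c (t + 1) = false ∧
          Gword n c (t + 2) = true ∧ Gword n c (t + 3) = false)) := by
  constructor
  · intro hall
    refine ⟨?_, ?_, ?_⟩
    -- no 000
    · rintro ⟨t, htl, h0, h1, h2⟩
      by_cases hA : t ≤ 4
      · have ht : t = 0 ∨ t = 1 ∨ t = 2 ∨ t = 3 ∨ t = 4 := by omega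
        rcases ht with rfl | rfl | rfl | rfl | rfl
        · rw [Gword_pre_true (by omega)] at h0; simp at h0
        · rw [Gword_pre_true (by omega)] at h2; simp at h2
        · rw [Gword_pre_true (by omega)] at h1; simp at h1
        · rw [Gword_pre_true (by omega)] at h0; simp at h0
        · rw [Gword_pre_true (by omega)] at h0; simp at h0
      by_cases hB : n + 5 ≤ t
      · have ht : t = n+5 ∨ t = n+6 ∨ t = n+7 ∨ t = n+8 ∨ t = n+9 := by omega
        rcases ht with rfl | rfl | rfl | rfl | rfl
        · rw [Gword_suf_true (by omega)] at h2; simp at h2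
        · rw [Gword_suf_true (by omega)] at h1; simp at h1
        · rw [Gword_suf_true (by omega)] at h0; simp at h0
        · rw [Gword_suf_true (by omega)] at h0; simp at h0
        · rw [Gword_suf_true (by omega)] at h2; simp at h2
      · rw [Gword_zone hc (by omega) (by omega),
          show ((t:ℕ):ℤ) - 6 = (t:ℤ) - 6 by ring] at h0
        rw [Gword_zone hc (by omega) (by omega),
          show ((t+1:ℕ):ℤ) - 6 = (t:ℤ) - 5 by push_cast; ring] at h1
        rw [Gword_zone hc (by omega) (by omega),
          show ((t+2:ℕ):ℤ) - 6 = (t:ℤ) - 4 by push_cast; ring] at h2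
        have hb := hall ((t:ℤ) - 5) (by omega) (by omega) h1
        rcases hb with ⟨k1, k2⟩ | ⟨k1, k2⟩ | ⟨k1, k2⟩
        · rw [show (t:ℤ) - 5 - 1 = (t:ℤ) - 6 by ring] at k2; simp [k2] at h0
        · rw [show (t:ℤ) - 5 - 1 = (t:ℤ) - 6 by ring] at k1; simp [k1] at h0
        · rw [show (t:ℤ) - 5 + 1 = (t:ℤ) - 4 by ring] at k1; simp [k1] at h2
    -- no 0100
    · rintro ⟨t, htl, h0, h1, h2, h3⟩
      by_cases hA : t ≤ 4
      · have ht : t = 0 ∨ t = 1 ∨ t = 2 ∨ t = 3 ∨ t = 4 := by omega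
        rcases ht with rfl | rfl | rfl | rfl | rfl
        · rw [Gword_pre_false (by omega)] at h1; simp at h1
        · rw [Gword_pre_false (by omega)] at h1; simp at h1
        · rw [Gword_pre_true (by omega)] at h2; simp at h2
        · rw [Gword_pre_true (by omega)] at h0; simp at h0
        · rw [Gword_pre_true (by omega)] at h0; simp at h0
      by_cases hB : n + 5 ≤ t
      · have ht : t = n+5 ∨ t = n+6 ∨ t = n+7 ∨ t = n+8 := by omega
        rcases ht with rfl | rfl | rfl | rfl
        · rw [Gword_suf_false (by omega)] at h1; simp at h1
        · rw [Gword_suf_true (by omega)] at h2; simp at h2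
        · rw [Gword_suf_true (by omega)] at h0; simp at h0
        · rw [Gword_suf_true (by omega)] at h0; simp at h0
      by_cases hC : t = n + 4
      · subst hC
        rw [Gword_suf_true (by omega)] at h3; simp at h3
      · rw [Gword_zone hc (by omega) (by omega),
          show ((t:ℕ):ℤ) - 6 = (t:ℤ) - 6 by ring] at h0
        rw [Gword_zone hc (by omega) (by omega),
          show ((t+1:ℕ):ℤ) - 6 = (t:ℤ) - 5 by push_cast; ring] at h1
        rw [Gword_zone hc (by omega) (by omega),
          show ((t+2:ℕ):ℤ) - 6 = (t:ℤ) - 4 by push_cast; ring] at h2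
        rw [Gword_zone hc (by omega) (by omega),
          show ((t+3:ℕ):ℤ) - 6 = (t:ℤ) - 3 by push_cast; ring] at h3
        have hb := hall ((t:ℤ) - 4) (by omega) (by omega) h2
        rcases hb with ⟨k1, k2⟩ | ⟨k1, k2⟩ | ⟨k1, k2⟩
        · rw [show (t:ℤ) - 4 - 2 = (t:ℤ) - 6 by ring] at k1; simp [k1] at h0
        · rw [show (t:ℤ) - 4 + 1 = (t:ℤ) - 3 by ring] at k2; simp [k2] at h3
        · rw [show (t:ℤ) - 4 + 1 = (t:ℤ) - 3 by ring] at k1; simp [k1] at h3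
    -- no 0010
    · rintro ⟨t, htl, h0, h1, h2, h3⟩
      by_cases hA : t ≤ 4
      · have ht : t = 0 ∨ t = 1 ∨ t = 2 ∨ t = 3 ∨ t = 4 := by omega
        rcases ht with rfl | rfl | rfl | rfl | rfl
        · rw [Gword_pre_true (by omega)] at h0; simp at h0
        · rw [Gword_pre_true (by omega)] at h3; simp at h3
        · rw [Gword_pre_true (by omega)] at h1; simp at h1
        · rw [Gword_pre_true (by omega)] at h0; simp at h0
        · rw [Gword_pre_true (by omega)] at h0; simp at h0
      by_cases hB : n + 5 ≤ t
      · have ht : t = n+5 ∨ t = n+6 ∨ t = n+7 ∨ t = n+8 := by omega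
        rcases ht with rfl | rfl | rfl | rfl
        · rw [Gword_suf_true (by omega)] at h3; simp at h3
        · rw [Gword_suf_true (by omega)] at h1; simp at h1
        · rw [Gword_suf_true (by omega)] at h0; simp at h0
        · rw [Gword_suf_false (by omega)] at h2; simp at h2
      by_cases hC : t = n + 4
      · subst hC
        rw [Gword_suf_false (by omega)] at h2; simp at h2
      · rw [Gword_zone hc (by omega) (by omega),
          show ((t:ℕ):ℤ) - 6 = (t:ℤ) - 6 by ring] at h0
        rw [Gword_zone hc (by omega) (by omega),
          show ((t+1:ℕ):ℤ) - 6 = (t:ℤ) - 5 by push_cast; ring] at h1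
        rw [Gword_zone hc (by omega) (by omega),
          show ((t+2:ℕ):ℤ) - 6 = (t:ℤ) - 4 by push_cast; ring] at h2
        rw [Gword_zone hc (by omega) (by omega),
          show ((t+3:ℕ):ℤ) - 6 = (t:ℤ) - 3 by push_cast; ring] at h3
        have hb := hall ((t:ℤ) - 5) (by omega) (by omega) h1
        rcases hb with ⟨k1, k2⟩ | ⟨k1, k2⟩ | ⟨k1, k2⟩
        · rw [show (t:ℤ) - 5 - 1 = (t:ℤ) - 6 by ring] at k2; simp [k2] at h0
        · rw [show (t:ℤ) - 5 - 1 = (t:ℤ) - 6 by ring] at k1; simp [k1] at h0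
        · rw [show (t:ℤ) - 5 + 2 = (t:ℤ) - 3 by ring] at k2; simp [k2] at h3
  · rintro ⟨hB, hC, hD⟩ j hj0 hjn hj
    rcases Bool.eq_false_or_eq_true (c (j - 1)) with hm | hm <;>
      rcases Bool.eq_false_or_eq_true (c (j + 1)) with hp | hp
    -- c (j-1) = true, c (j+1) = true
    · right; left; exact ⟨hm, hp⟩
    -- c (j-1) = true, c (j+1) = false
    · rcases Bool.eq_false_or_eq_true (c (j - 2)) with hq | hq
      · left; exact ⟨hq, hm⟩
      · exfalso
        have hj1 : 1 ≤ j := by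
          by_contra hcon
          rw [hc _ (Or.inl (by omega))] at hm
          simp at hm
        refine hC ⟨j.toNat + 4, by omega, ?_, ?_, ?_, ?_⟩
        · rw [Gword_zone hc (by omega) (by omega),
            show ((j.toNat + 4 : ℕ) : ℤ) - 6 = j - 2 by push_cast; omega]
          exact hq
        · rw [Gword_zone hc (by omega) (by omega),
            show ((j.toNat + 4 + 1 : ℕ) : ℤ) - 6 = j - 1 by push_cast; omega]
          exact hm
        · rw [Gword_zone hc (by omega) (by omega),
            show ((j.toNat + 4 + 2 : ℕ) : ℤ) - 6 = j by push_cast; omega]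
          exact hj
        · rw [Gword_zone hc (by omega) (by omega),
            show ((j.toNat + 4 + 3 : ℕ) : ℤ) - 6 = j + 1 by push_cast; omega]
          exact hp
    -- c (j-1) = false, c (j+1) = true
    · rcases Bool.eq_false_or_eq_true (c (j + 2)) with hq | hq
      · right; right; exact ⟨hp, hq⟩
      · exfalso
        have hjn2 : j + 1 < (n : ℤ) := by
          by_contra hcon
          rw [hc _ (Or.inr (by omega))] at hp
          simp at hp
        refine hD ⟨j.toNat + 5, by omega, ?_, ?_, ?_, ?_⟩
        · rw [Gword_zone hc (by omega) (by omega),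
            show ((j.toNat + 5 : ℕ) : ℤ) - 6 = j - 1 by push_cast; omega]
          exact hm
        · rw [Gword_zone hc (by omega) (by omega),
            show ((j.toNat + 5 + 1 : ℕ) : ℤ) - 6 = j by push_cast; omega]
          exact hj
        · rw [Gword_zone hc (by omega) (by omega),
            show ((j.toNat + 5 + 2 : ℕ) : ℤ) - 6 = j + 1 by push_cast; omega]
          exact hp
        · rw [Gword_zone hc (by omega) (by omega),
            show ((j.toNat + 5 + 3 : ℕ) : ℤ) - 6 = j + 2 by push_cast; omega]
          exact hq
    -- both false : contradiction with no 000
    · exfalso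
      refine hB ⟨j.toNat + 5, by omega, ?_, ?_, ?_⟩
      · rw [Gword_zone hc (by omega) (by omega),
          show ((j.toNat + 5 : ℕ) : ℤ) - 6 = j - 1 by push_cast; omega]
        exact hm
      · rw [Gword_zone hc (by omega) (by omega),
          show ((j.toNat + 5 + 1 : ℕ) : ℤ) - 6 = j by push_cast; omega]
        exact hj
      · rw [Gword_zone hc (by omega) (by omega),
          show ((j.toNat + 5 + 2 : ℕ) : ℤ) - 6 = j + 1 by push_cast; omega]
        exact hp

theorem riviera_maximal_iff_word_avoids_factors (n : ℕ) (c : ℤ → Bool)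
    (hc : RivieraConfig n c) :
    RivieraMaximal n c ↔
      ¬ [true, true, true] <:+: paddedWord n c ∧
      ¬ [false, false, false] <:+: paddedWord n c ∧
      ¬ [false, true, false, false] <:+: paddedWord n c ∧
      ¬ [false, false, true, false] <:+: paddedWord n c := by
  rw [infix3_iff, infix3_iff, infix4_iff, infix4_iff]
  constructor
  · rintro ⟨hperm, hmax⟩
    have hall : ∀ j : ℤ, 0 ≤ j → j < (n : ℤ) → c j = false → Blocked c j := fun j h1 h2 h3 =>
      blocked_of_not_perm c j hperm (hmax j h1 h2 h3)
    obtain ⟨hB, hC, hD⟩ := (blocked_iff_noBCD hc).mp hall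
    exact ⟨(permissible_iff_noA hc).mp hperm, hB, hC, hD⟩
  · rintro ⟨hA, hB, hC, hD⟩
    refine ⟨(permissible_iff_noA hc).mpr hA, fun j h1 h2 h3 => ?_⟩
    exact not_perm_of_blocked c j ((blocked_iff_noBCD hc).mpr ⟨hB, hC, hD⟩ j h1 h2 h3)
end

section
/- Let a_n denote the number of maximal configurations of length n in the two-story Riviera model. Then a_0 = 1, a_1 = 1, a_2 = 1, a_3 = 3, a_4 = 6, a_5 = 7, a_6 = 8, a_7 = 11, a_8 = 18, a_9 = 30, and for every n ≥ 10 one has a_n + a_{n−8} + 2a_{n−9} + a_{n−10} = a_{n−3} + a_{n−4} + 2a_{n−5} + 2a_{n−6} + a_{n−7} (equivalently, a_n = a_{n−3} + a_{n−4} + 2a_{n−5} + 2a_{n−6} + a_{n−7} − a_{n−8} − 2a_{n−9} − a_{n−10}). -/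
set_option maxRecDepth 40000
set_option maxHeartbeats 1000000


/-- A two-story Riviera configuration of length `n` (`true` = a two-story house),
zero-padded outside `{0, …, n−1}`. -/
def TwoStoryConfig (n : ℕ) (c : ℤ → Bool) : Prop :=
  ∀ j : ℤ, j < 0 ∨ (n : ℤ) ≤ j → c j = false

/-- Permissibility in the two-story Riviera model: for every occupied lot `i`,
story 1 gets sunlight (no occupied lot among `{i+1, i+2}` or none among `{i−2, i−1}`)
and story 2 gets sunlight (lot `i+1` or lot `i−1` is unoccupied). -/
def TwoStoryPermissible (c : ℤ → Bool) : Prop :=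
  ∀ i : ℤ, c i = true →
    ((c (i + 1) = false ∧ c (i + 2) = false) ∨ (c (i - 2) = false ∧ c (i - 1) = false)) ∧
    (c (i + 1) = false ∨ c (i - 1) = false)

/-- Maximality in the two-story Riviera model. -/
def TwoStoryMaximal (n : ℕ) (c : ℤ → Bool) : Prop :=
  TwoStoryPermissible c ∧
    ∀ j : ℤ, 0 ≤ j → j < (n : ℤ) → c j = false →
      ¬ TwoStoryPermissible (Function.update c j true)

/-- `twoStoryCount n` = number of maximal configurations of length `n`
in the two-story Riviera model. -/
noncomputable def twoStoryCount (n : ℕ) : ℕ :=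
  Nat.card {c : ℤ → Bool // TwoStoryConfig n c ∧ TwoStoryMaximal n c}


def pB (l2 l1 r1 r2 : Bool) : Bool :=
  ((!r1 && !r2) || (!l2 && !l1)) && (!r1 || !l1)
def WF (w : Fin 9 → Bool) : Bool :=
  if w 4 then pB (w 2) (w 3) (w 5) (w 6)
  else
    (w 2 && !pB (w 0) (w 1) (w 3) true) ||
    (w 3 && !pB (w 1) (w 2) true (w 5)) ||
    (!pB (w 2) (w 3) (w 5) (w 6)) ||
    (w 5 && !pB (w 3) true (w 6) (w 7)) ||
    (w 6 && !pB true (w 5) (w 7) (w 8))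
def win (c : ℤ → Bool) (j : ℤ) : Fin 9 → Bool :=
  ![c (j-4), c (j-3), c (j-2), c (j-1), c j, c (j+1), c (j+2), c (j+3), c (j+4)]
def QB (c : ℤ → Bool) (j : ℤ) : Prop := WF (win c j) = true

lemma WF_win (c : ℤ → Bool) (j : ℤ) : WF (win c j) =
  (if c j then pB (c (j-2)) (c (j-1)) (c (j+1)) (c (j+2))
   else (c (j-2) && !pB (c (j-4)) (c (j-3)) (c (j-1)) true) ||
        (c (j-1) && !pB (c (j-3)) (c (j-2)) true (c (j+1))) ||
        (!pB (c (j-2)) (c (j-1)) (c (j+1)) (c (j+2))) ||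
        (c (j+1) && !pB (c (j-1)) true (c (j+2)) (c (j+3))) ||
        (c (j+2) && !pB true (c (j+1)) (c (j+3)) (c (j+4)))) := rfl

lemma pB_iff (a b d e : Bool) : pB a b d e = true ↔
    (((d = false ∧ e = false) ∨ (a = false ∧ b = false)) ∧ (d = false ∨ b = false)) := by
  revert a b d e; decide

lemma perm_iff (c : ℤ → Bool) :
    TwoStoryPermissible c ↔
      ∀ i : ℤ, c i = true → pB (c (i-2)) (c (i-1)) (c (i+1)) (c (i+2)) = true := by
  constructor
  · intro h i hi; rw [pB_iff]; exact h i hi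
  · intro h i hi; have := (pB_iff _ _ _ _).1 (h i hi); exact this

lemma riviera_maximal_iff {n : ℕ} {c : ℤ → Bool} (hc : TwoStoryConfig n c) :
    TwoStoryMaximal n c ↔ ∀ j : ℤ, 0 ≤ j → j < (n:ℤ) → QB c j := by
  constructor
  · rintro ⟨hp, hm⟩ j hj0 hjn
    unfold QB; rw [WF_win]
    by_cases hcj : c j = true
    · rw [if_pos hcj]; exact (perm_iff c).1 hp j hcj
    · replace hcj : c j = false := by simpa using hcj
      rw [if_neg (by simp [hcj])]
      have hne := hm j hj0 hjn hcj
      rw [perm_iff] at hne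
      push_neg at hne
      obtain ⟨i, hci', hpb⟩ := hne
      set c' := Function.update c j true with hc'
      have upd_eq : c' j = true := Function.update_self _ _ _
      have upd_ne : ∀ k : ℤ, k ≠ j → c' k = c k := fun k hk => Function.update_of_ne hk _ _
      replace hpb : pB (c' (i-2)) (c' (i-1)) (c' (i+1)) (c' (i+2)) = false := by
        simpa using hpb
      have hcases : i = j - 2 ∨ i = j - 1 ∨ i = j ∨ i = j + 1 ∨ i = j + 2 ∨
          (i < j - 2 ∨ j + 2 < i) := by omega
      simp only [Bool.or_eq_true, Bool.and_eq_true, Bool.not_eq_true']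
      rcases hcases with h|h|h|h|h|h
      · subst h
        refine Or.inl (Or.inl (Or.inl (Or.inl ⟨?_, ?_⟩)))
        · rw [← upd_ne (j-2) (by omega)]; exact hci'
        · rw [show j - 2 - 2 = j - 4 by ring, show j - 2 - 1 = j - 3 by ring,
            show j - 2 + 1 = j - 1 by ring, show j - 2 + 2 = j by ring,
            upd_ne (j-4) (by omega), upd_ne (j-3) (by omega), upd_ne (j-1) (by omega),
            upd_eq] at hpb
          exact hpb
      · subst h
        refine Or.inl (Or.inl (Or.inl (Or.inr ⟨?_, ?_⟩)))
        · rw [← upd_ne (j-1) (by omega)]; exact hci'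
        · rw [show j - 1 - 2 = j - 3 by ring, show j - 1 - 1 = j - 2 by ring,
            show j - 1 + 1 = j by ring, show j - 1 + 2 = j + 1 by ring,
            upd_ne (j-3) (by omega), upd_ne (j-2) (by omega), upd_ne (j+1) (by omega),
            upd_eq] at hpb
          exact hpb
      · subst h
        refine Or.inl (Or.inl (Or.inr ?_))
        rw [upd_ne (i-2) (by omega), upd_ne (i-1) (by omega), upd_ne (i+1) (by omega),
          upd_ne (i+2) (by omega)] at hpb
        exact hpb
      · subst h
        refine Or.inl (Or.inr ⟨?_, ?_⟩)
        · rw [← upd_ne (j+1) (by omega)]; exact hci'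
        · rw [show j + 1 - 2 = j - 1 by ring, show j + 1 - 1 = j by ring,
            show j + 1 + 1 = j + 2 by ring, show j + 1 + 2 = j + 3 by ring,
            upd_ne (j-1) (by omega), upd_ne (j+2) (by omega), upd_ne (j+3) (by omega),
            upd_eq] at hpb
          exact hpb
      · subst h
        refine Or.inr ⟨?_, ?_⟩
        · rw [← upd_ne (j+2) (by omega)]; exact hci'
        · rw [show j + 2 - 2 = j by ring, show j + 2 - 1 = j + 1 by ring,
            show j + 2 + 1 = j + 3 by ring, show j + 2 + 2 = j + 4 by ring,
            upd_ne (j+1) (by omega), upd_ne (j+3) (by omega), upd_ne (j+4) (by omega),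
            upd_eq] at hpb
          exact hpb
      · exfalso
        have hci : c i = true := by rw [← upd_ne i (by omega)]; exact hci'
        have := (perm_iff c).1 hp i hci
        rw [upd_ne (i-2) (by omega), upd_ne (i-1) (by omega), upd_ne (i+1) (by omega),
          upd_ne (i+2) (by omega)] at hpb
        rw [this] at hpb; simp at hpb
  · intro hq
    have hperm : TwoStoryPermissible c := by
      rw [perm_iff]; intro i hci
      by_cases hir : 0 ≤ i ∧ i < (n:ℤ)
      · have hQ := hq i hir.1 hir.2
        unfold QB at hQ; rw [WF_win, if_pos hci] at hQ
        exact hQ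
      · exact absurd (hc i (by omega)) (by simp [hci])
    refine ⟨hperm, ?_⟩
    intro j hj0 hjn hcj
    have hQ := hq j hj0 hjn
    unfold QB at hQ; rw [WF_win, if_neg (by simp [hcj])] at hQ
    simp only [Bool.or_eq_true, Bool.and_eq_true, Bool.not_eq_true'] at hQ
    rw [perm_iff]
    push_neg
    set c' := Function.update c j true with hc'
    have upd_eq : c' j = true := Function.update_self _ _ _
    have upd_ne : ∀ k : ℤ, k ≠ j → c' k = c k := fun k hk => Function.update_of_ne hk _ _
    rcases hQ with (((⟨h1,h2⟩|⟨h1,h2⟩)|h2)|⟨h1,h2⟩)|⟨h1,h2⟩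
    · refine ⟨j-2, by rw [upd_ne (j-2) (by omega)]; exact h1, ?_⟩
      rw [show j - 2 - 2 = j - 4 by ring, show j - 2 - 1 = j - 3 by ring,
        show j - 2 + 1 = j - 1 by ring, show j - 2 + 2 = j by ring,
        upd_ne (j-4) (by omega), upd_ne (j-3) (by omega), upd_ne (j-1) (by omega), upd_eq]
      simp [h2]
    · refine ⟨j-1, by rw [upd_ne (j-1) (by omega)]; exact h1, ?_⟩
      rw [show j - 1 - 2 = j - 3 by ring, show j - 1 - 1 = j - 2 by ring,
        show j - 1 + 1 = j by ring, show j - 1 + 2 = j + 1 by ring,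
        upd_ne (j-3) (by omega), upd_ne (j-2) (by omega), upd_ne (j+1) (by omega), upd_eq]
      simp [h2]
    · refine ⟨j, upd_eq, ?_⟩
      rw [upd_ne (j-2) (by omega), upd_ne (j-1) (by omega), upd_ne (j+1) (by omega),
        upd_ne (j+2) (by omega)]
      simp [h2]
    · refine ⟨j+1, by rw [upd_ne (j+1) (by omega)]; exact h1, ?_⟩
      rw [show j + 1 - 2 = j - 1 by ring, show j + 1 - 1 = j by ring,
        show j + 1 + 1 = j + 2 by ring, show j + 1 + 2 = j + 3 by ring,
        upd_ne (j-1) (by omega), upd_ne (j+2) (by omega), upd_ne (j+3) (by omega), upd_eq]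
      simp [h2]
    · refine ⟨j+2, by rw [upd_ne (j+2) (by omega)]; exact h1, ?_⟩
      rw [show j + 2 - 2 = j by ring, show j + 2 - 1 = j + 1 by ring,
        show j + 2 + 1 = j + 3 by ring, show j + 2 + 2 = j + 4 by ring,
        upd_ne (j+1) (by omega), upd_ne (j+3) (by omega), upd_ne (j+4) (by omega), upd_eq]
      simp [h2]

def PG (n : ℕ) (c : ℤ → Bool) : Prop :=
  TwoStoryConfig n c ∧ ∀ j : ℤ, 0 ≤ j → j + 5 ≤ (n:ℤ) → QB c j

def st (n : ℕ) (c : ℤ → Bool) : Fin 8 → Bool :=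
  ![c ((n:ℤ)-1), c ((n:ℤ)-2), c ((n:ℤ)-3), c ((n:ℤ)-4),
    c ((n:ℤ)-5), c ((n:ℤ)-6), c ((n:ℤ)-7), c ((n:ℤ)-8)]

def prevS (s : Fin 8 → Bool) (b : Bool) : Fin 8 → Bool :=
  ![s 1, s 2, s 3, s 4, s 5, s 6, s 7, b]
def stepWin (s : Fin 8 → Bool) (b : Bool) : Fin 9 → Bool :=
  ![b, s 7, s 6, s 5, s 4, s 3, s 2, s 1, s 0]

lemma finite_sub {n : ℕ} {P : (ℤ → Bool) → Prop}
    (hP : ∀ c, P c → TwoStoryConfig n c) : Finite {c : ℤ → Bool // P c} := by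
  apply Finite.of_injective (fun c : {c : ℤ → Bool // P c} => (fun k : Fin n => c.1 (k : ℤ)))
  rintro ⟨c1, h1⟩ ⟨c2, h2⟩ h
  apply Subtype.ext
  funext j
  show c1 j = c2 j
  by_cases hj : 0 ≤ j ∧ j < (n:ℤ)
  · have := congrFun h ⟨j.toNat, by omega⟩
    simpa [Int.toNat_of_nonneg hj.1] using this
  · rw [hP c1 h1 j (by omega), hP c2 h2 j (by omega)]

noncomputable def NN (n : ℕ) (s : Fin 8 → Bool) : ℕ :=
  Nat.card {c : ℤ → Bool // PG n c ∧ st n c = s}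

lemma win_eq_of_agree {c1 c2 : ℤ → Bool} {j : ℤ}
    (h : ∀ k, j - 4 ≤ k → k ≤ j + 4 → c1 k = c2 k) : win c1 j = win c2 j := by
  funext m
  fin_cases m <;> exact h _ (by omega) (by omega)

lemma QB_congr {c1 c2 : ℤ → Bool} {j : ℤ}
    (h : ∀ k, j - 4 ≤ k → k ≤ j + 4 → c1 k = c2 k) : QB c1 j ↔ QB c2 j := by
  unfold QB; rw [win_eq_of_agree h]

lemma win_at {n : ℕ} {c : ℤ → Bool} {s : Fin 8 → Bool} {b : Bool}
    (h2 : st (n+1) c = s) (h3 : c ((n:ℤ)-8) = b) :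
    win c ((n:ℤ)-4) = stepWin s b := by
  funext m
  fin_cases m
  · show c ((n:ℤ)-4-4) = b
    rw [show (n:ℤ)-4-4 = (n:ℤ)-8 by ring]; exact h3
  · show c ((n:ℤ)-4-3) = s 7
    rw [show (n:ℤ)-4-3 = ((n+1:ℕ):ℤ)-8 by push_cast; ring]; exact congrFun h2 7
  · show c ((n:ℤ)-4-2) = s 6
    rw [show (n:ℤ)-4-2 = ((n+1:ℕ):ℤ)-7 by push_cast; ring]; exact congrFun h2 6
  · show c ((n:ℤ)-4-1) = s 5
    rw [show (n:ℤ)-4-1 = ((n+1:ℕ):ℤ)-6 by push_cast; ring]; exact congrFun h2 5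
  · show c ((n:ℤ)-4) = s 4
    rw [show (n:ℤ)-4 = ((n+1:ℕ):ℤ)-5 by push_cast; ring]; exact congrFun h2 4
  · show c ((n:ℤ)-4+1) = s 3
    rw [show (n:ℤ)-4+1 = ((n+1:ℕ):ℤ)-4 by push_cast; ring]; exact congrFun h2 3
  · show c ((n:ℤ)-4+2) = s 2
    rw [show (n:ℤ)-4+2 = ((n+1:ℕ):ℤ)-3 by push_cast; ring]; exact congrFun h2 2
  · show c ((n:ℤ)-4+3) = s 1
    rw [show (n:ℤ)-4+3 = ((n+1:ℕ):ℤ)-2 by push_cast; ring]; exact congrFun h2 1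
  · show c ((n:ℤ)-4+4) = s 0
    rw [show (n:ℤ)-4+4 = ((n+1:ℕ):ℤ)-1 by push_cast; ring]; exact congrFun h2 0

lemma trunc_mem {n : ℕ} {c : ℤ → Bool} {s : Fin 8 → Bool} {b : Bool}
    (h1 : PG (n+1) c) (h2 : st (n+1) c = s) (h3 : c ((n:ℤ)-8) = b) :
    PG n (Function.update c (n:ℤ) false) ∧
      st n (Function.update c (n:ℤ) false) = prevS s b := by
  obtain ⟨hcfg, hwin⟩ := h1
  have hne : ∀ k : ℤ, k ≠ (n:ℤ) → Function.update c (n:ℤ) false k = c k :=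
    fun k hk => Function.update_of_ne hk _ _
  refine ⟨⟨?_, ?_⟩, ?_⟩
  · intro j hj
    rcases eq_or_ne j (n:ℤ) with rfl|hj'
    · exact Function.update_self _ _ _
    · rw [hne j hj']; exact hcfg j (by push_cast; push_cast at hj; omega)
  · intro j hj0 hj5
    refine (QB_congr ?_).2 (hwin j hj0 (by push_cast; omega))
    intro k hk1 hk2; exact hne k (by omega)
  · funext k
    fin_cases k
    · show Function.update c (n:ℤ) false ((n:ℤ)-1) = s 1
      rw [hne _ (by omega), show (n:ℤ)-1 = ((n+1:ℕ):ℤ)-2 by push_cast; ring]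
      exact congrFun h2 1
    · show Function.update c (n:ℤ) false ((n:ℤ)-2) = s 2
      rw [hne _ (by omega), show (n:ℤ)-2 = ((n+1:ℕ):ℤ)-3 by push_cast; ring]
      exact congrFun h2 2
    · show Function.update c (n:ℤ) false ((n:ℤ)-3) = s 3
      rw [hne _ (by omega), show (n:ℤ)-3 = ((n+1:ℕ):ℤ)-4 by push_cast; ring]
      exact congrFun h2 3
    · show Function.update c (n:ℤ) false ((n:ℤ)-4) = s 4
      rw [hne _ (by omega), show (n:ℤ)-4 = ((n+1:ℕ):ℤ)-5 by push_cast; ring]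
      exact congrFun h2 4
    · show Function.update c (n:ℤ) false ((n:ℤ)-5) = s 5
      rw [hne _ (by omega), show (n:ℤ)-5 = ((n+1:ℕ):ℤ)-6 by push_cast; ring]
      exact congrFun h2 5
    · show Function.update c (n:ℤ) false ((n:ℤ)-6) = s 6
      rw [hne _ (by omega), show (n:ℤ)-6 = ((n+1:ℕ):ℤ)-7 by push_cast; ring]
      exact congrFun h2 6
    · show Function.update c (n:ℤ) false ((n:ℤ)-7) = s 7
      rw [hne _ (by omega), show (n:ℤ)-7 = ((n+1:ℕ):ℤ)-8 by push_cast; ring]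
      exact congrFun h2 7
    · show Function.update c (n:ℤ) false ((n:ℤ)-8) = b
      rw [hne _ (by omega)]; exact h3

lemma ext_mem {n : ℕ} (hn : 4 ≤ n) {c : ℤ → Bool} {s : Fin 8 → Bool} {b : Bool}
    (hW : WF (stepWin s b) = true)
    (h1 : PG n c) (h2 : st n c = prevS s b) :
    (PG (n+1) (Function.update c (n:ℤ) (s 0)) ∧
      st (n+1) (Function.update c (n:ℤ) (s 0)) = s) ∧
      (Function.update c (n:ℤ) (s 0)) ((n:ℤ)-8) = b := by
  obtain ⟨hcfg, hwin⟩ := h1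
  have hne : ∀ k : ℤ, k ≠ (n:ℤ) → Function.update c (n:ℤ) (s 0) k = c k :=
    fun k hk => Function.update_of_ne hk _ _
  have hstate : st (n+1) (Function.update c (n:ℤ) (s 0)) = s := by
    funext k
    fin_cases k
    · show Function.update c (n:ℤ) (s 0) (((n+1:ℕ):ℤ)-1) = s 0
      rw [show ((n+1:ℕ):ℤ)-1 = (n:ℤ) by push_cast; ring]
      exact Function.update_self _ _ _
    · show Function.update c (n:ℤ) (s 0) (((n+1:ℕ):ℤ)-2) = s 1
      rw [show ((n+1:ℕ):ℤ)-2 = (n:ℤ)-1 by push_cast; ring, hne _ (by omega)]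
      exact congrFun h2 0
    · show Function.update c (n:ℤ) (s 0) (((n+1:ℕ):ℤ)-3) = s 2
      rw [show ((n+1:ℕ):ℤ)-3 = (n:ℤ)-2 by push_cast; ring, hne _ (by omega)]
      exact congrFun h2 1
    · show Function.update c (n:ℤ) (s 0) (((n+1:ℕ):ℤ)-4) = s 3
      rw [show ((n+1:ℕ):ℤ)-4 = (n:ℤ)-3 by push_cast; ring, hne _ (by omega)]
      exact congrFun h2 2
    · show Function.update c (n:ℤ) (s 0) (((n+1:ℕ):ℤ)-5) = s 4
      rw [show ((n+1:ℕ):ℤ)-5 = (n:ℤ)-4 by push_cast; ring, hne _ (by omega)]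
      exact congrFun h2 3
    · show Function.update c (n:ℤ) (s 0) (((n+1:ℕ):ℤ)-6) = s 5
      rw [show ((n+1:ℕ):ℤ)-6 = (n:ℤ)-5 by push_cast; ring, hne _ (by omega)]
      exact congrFun h2 4
    · show Function.update c (n:ℤ) (s 0) (((n+1:ℕ):ℤ)-7) = s 6
      rw [show ((n+1:ℕ):ℤ)-7 = (n:ℤ)-6 by push_cast; ring, hne _ (by omega)]
      exact congrFun h2 5
    · show Function.update c (n:ℤ) (s 0) (((n+1:ℕ):ℤ)-8) = s 7
      rw [show ((n+1:ℕ):ℤ)-8 = (n:ℤ)-7 by push_cast; ring, hne _ (by omega)]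
      exact congrFun h2 6
  have hlast : (Function.update c (n:ℤ) (s 0)) ((n:ℤ)-8) = b := by
    rw [hne _ (by omega)]
    exact congrFun h2 7
  refine ⟨⟨⟨?_, ?_⟩, hstate⟩, hlast⟩
  · intro j hj
    rcases eq_or_ne j (n:ℤ) with rfl|hj'
    · exfalso; push_cast at hj; omega
    · rw [hne j hj']; exact hcfg j (by push_cast; push_cast at hj; omega)
  · intro j hj0 hj5
    rcases (by push_cast at hj5 ⊢; omega : j + 5 ≤ (n:ℤ) ∨ j = (n:ℤ) - 4) with hj'|hj'
    · refine (QB_congr ?_).2 (hwin j hj0 hj')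
      intro k hk1 hk2; exact hne k (by omega)
    · subst hj'
      show WF (win (Function.update c (n:ℤ) (s 0)) ((n:ℤ)-4)) = true
      rw [win_at (b := b) (s := s) ?_ ?_]
      · exact hW
      · exact hstate
      · exact hlast

lemma st4_val (c : ℤ → Bool) :
    st 4 c = ![c 3, c 2, c 1, c 0, c (-1), c (-2), c (-3), c (-4)] := by
  funext k
  fin_cases k <;> rfl

lemma NN_base (s : Fin 8 → Bool) :
    NN 4 s = if s 4 || s 5 || s 6 || s 7 then 0 else 1 := by
  by_cases h : (s 4 || s 5 || s 6 || s 7) = true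
  · rw [if_pos h]
    have he : IsEmpty {c : ℤ → Bool // PG 4 c ∧ st 4 c = s} := by
      constructor
      rintro ⟨c, ⟨⟨hcfg, _⟩, hst⟩⟩
      rw [st4_val] at hst
      have e4 : s 4 = false := by rw [← hst]; exact hcfg (-1) (by norm_num)
      have e5 : s 5 = false := by rw [← hst]; exact hcfg (-2) (by norm_num)
      have e6 : s 6 = false := by rw [← hst]; exact hcfg (-3) (by norm_num)
      have e7 : s 7 = false := by rw [← hst]; exact hcfg (-4) (by norm_num)
      rw [e4, e5, e6, e7] at h
      simp at h
    exact Nat.card_of_isEmpty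
  · rw [if_neg h]
    simp only [Bool.or_eq_true, not_or, Bool.not_eq_true] at h
    obtain ⟨⟨⟨h4, h5⟩, h6⟩, h7⟩ := h
    set c0 : ℤ → Bool := fun j =>
      if j = 0 then s 3 else if j = 1 then s 2 else if j = 2 then s 1 else
      if j = 3 then s 0 else false with hc0
    have hcfg : TwoStoryConfig 4 c0 := by
      intro j hj
      simp only [hc0]
      rw [if_neg (by omega), if_neg (by omega), if_neg (by omega), if_neg (by omega)]
    have hmem : PG 4 c0 ∧ st 4 c0 = s := by
      refine ⟨⟨hcfg, ?_⟩, ?_⟩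
      · intro j hj0 hj5; exfalso; push_cast at hj5; omega
      · rw [st4_val]
        funext k
        fin_cases k
        · show c0 3 = s 0
          simp only [hc0]; norm_num
        · show c0 2 = s 1
          simp only [hc0]; norm_num
        · show c0 1 = s 2
          simp only [hc0]; norm_num
        · show c0 0 = s 3
          simp only [hc0]; norm_num
        · show c0 (-1) = s 4
          simp only [hc0]; norm_num [h4]
        · show c0 (-2) = s 5
          simp only [hc0]; norm_num [h5]
        · show c0 (-3) = s 6
          simp only [hc0]; norm_num [h6]
        · show c0 (-4) = s 7
          simp only [hc0]; norm_num [h7]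
    have huniq : ∀ c : ℤ → Bool, PG 4 c ∧ st 4 c = s → c = c0 := by
      rintro c ⟨⟨hcfg', _⟩, hst⟩
      rw [st4_val] at hst
      funext j
      rcases (by omega : j = 0 ∨ j = 1 ∨ j = 2 ∨ j = 3 ∨ (j < 0 ∨ 4 ≤ j)) with h|h|h|h|h
      · subst h; simp only [hc0]; norm_num; exact (congrFun hst 3).symm ▸ rfl
      · subst h; simp only [hc0]; norm_num; exact congrFun hst 2
      · subst h; simp only [hc0]; norm_num; exact congrFun hst 1
      · subst h; simp only [hc0]; norm_num; exact congrFun hst 0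
      · rw [hcfg' j (by push_cast; omega)]
        simp only [hc0]
        rw [if_neg (by omega), if_neg (by omega), if_neg (by omega), if_neg (by omega)]
    haveI : Unique {c : ℤ → Bool // PG 4 c ∧ st 4 c = s} :=
      { default := ⟨c0, hmem⟩
        uniq := fun x => Subtype.ext (huniq x.1 x.2) }
    exact Nat.card_unique

lemma NN_step {n : ℕ} (hn : 4 ≤ n) (s : Fin 8 → Bool) :
    NN (n+1) s = (if WF (stepWin s false) = true then NN n (prevS s false) else 0)
               + (if WF (stepWin s true) = true then NN n (prevS s true) else 0) := by
  have key : ∀ b : Bool,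
      Nat.card {c : ℤ → Bool // (PG (n+1) c ∧ st (n+1) c = s) ∧ c ((n:ℤ)-8) = b} =
        if WF (stepWin s b) = true then NN n (prevS s b) else 0 := by
    intro b
    by_cases hW : WF (stepWin s b) = true
    · rw [if_pos hW]
      apply Nat.card_congr
      refine ⟨fun x => ⟨Function.update x.1 (n:ℤ) false,
          trunc_mem x.2.1.1 x.2.1.2 x.2.2⟩,
        fun y => ⟨Function.update y.1 (n:ℤ) (s 0),
          (ext_mem hn hW y.2.1 y.2.2).1, (ext_mem hn hW y.2.1 y.2.2).2⟩, ?_, ?_⟩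
      · rintro ⟨c, ⟨⟨h1, h2⟩, h3⟩⟩
        apply Subtype.ext
        show Function.update (Function.update c (n:ℤ) false) (n:ℤ) (s 0) = c
        funext j
        rcases eq_or_ne j (n:ℤ) with rfl|hj
        · rw [Function.update_self]
          have h0 : c (((n+1:ℕ):ℤ) - 1) = s 0 := congrFun h2 0
          rw [← h0]; congr 1; push_cast; ring
        · rw [Function.update_of_ne hj, Function.update_of_ne hj]
      · rintro ⟨c, ⟨hPG, hst⟩⟩
        apply Subtype.ext
        show Function.update (Function.update c (n:ℤ) (s 0)) (n:ℤ) false = c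
        funext j
        rcases eq_or_ne j (n:ℤ) with rfl|hj
        · rw [Function.update_self]
          exact (hPG.1 (n:ℤ) (by push_cast; omega)).symm
        · rw [Function.update_of_ne hj, Function.update_of_ne hj]
    · rw [if_neg hW]
      have he : IsEmpty {c : ℤ → Bool //
          (PG (n+1) c ∧ st (n+1) c = s) ∧ c ((n:ℤ)-8) = b} := by
        constructor
        rintro ⟨c, ⟨⟨⟨hcfg, hwin⟩, hst⟩, hb⟩⟩
        apply hW
        have hq : QB c ((n:ℤ)-4) := hwin _ (by push_cast; omega) (by push_cast; omega)
        unfold QB at hq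
        rwa [win_at hst hb] at hq
      exact Nat.card_of_isEmpty
  haveI : Finite {c : ℤ → Bool // PG (n+1) c ∧ st (n+1) c = s} :=
    finite_sub (fun c h => h.1.1)
  haveI : ∀ b : Bool, Finite {c : ℤ → Bool //
      (PG (n+1) c ∧ st (n+1) c = s) ∧ c ((n:ℤ)-8) = b} :=
    fun b => finite_sub (fun c h => h.1.1.1)
  rw [← key false, ← key true]
  rw [show NN (n+1) s = Nat.card {c : ℤ → Bool // PG (n+1) c ∧ st (n+1) c = s} from rfl]
  rw [← Nat.card_sum]
  apply Nat.card_congr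
  refine ⟨fun x => if h : x.1 ((n:ℤ)-8) = true then Sum.inr ⟨x.1, x.2, h⟩
      else Sum.inl ⟨x.1, x.2, by simpa using h⟩,
    fun y => y.elim (fun z => ⟨z.1, z.2.1⟩) (fun z => ⟨z.1, z.2.1⟩), ?_, ?_⟩
  · rintro ⟨c, hc⟩
    by_cases h : c ((n:ℤ)-8) = true <;> simp [h]
  · rintro (⟨c, hc⟩|⟨c, hc⟩)
    · have := hc.2; simp only [this]; simp [this]
    · have := hc.2; simp only [this]; simp [this]


section Acceptance

def AccS (s : Fin 8 → Bool) : Bool :=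
  WF ![s 7, s 6, s 5, s 4, s 3, s 2, s 1, s 0, false] &&
  WF ![s 6, s 5, s 4, s 3, s 2, s 1, s 0, false, false] &&
  WF ![s 5, s 4, s 3, s 2, s 1, s 0, false, false, false] &&
  WF ![s 4, s 3, s 2, s 1, s 0, false, false, false, false]

lemma winacc0 {n : ℕ} (hn : 4 ≤ n) {c : ℤ → Bool} (hcfg : TwoStoryConfig n c) :
    win c ((n:ℤ)-4) =
      ![c ((n:ℤ)-8), c ((n:ℤ)-7), c ((n:ℤ)-6), c ((n:ℤ)-5), c ((n:ℤ)-4),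
        c ((n:ℤ)-3), c ((n:ℤ)-2), c ((n:ℤ)-1), false] := by
  funext m
  fin_cases m <;>
    first
      | (show c _ = false; exact hcfg _ (by omega))
      | (show c _ = c _; (congr 1 <;> ring))

lemma winacc1 {n : ℕ} (hn : 4 ≤ n) {c : ℤ → Bool} (hcfg : TwoStoryConfig n c) :
    win c ((n:ℤ)-3) =
      ![c ((n:ℤ)-7), c ((n:ℤ)-6), c ((n:ℤ)-5), c ((n:ℤ)-4),
        c ((n:ℤ)-3), c ((n:ℤ)-2), c ((n:ℤ)-1), false, false] := by
  funext m
  fin_cases m <;>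
    first
      | (show c _ = false; exact hcfg _ (by omega))
      | (show c _ = c _; (congr 1 <;> ring))

lemma winacc2 {n : ℕ} (hn : 4 ≤ n) {c : ℤ → Bool} (hcfg : TwoStoryConfig n c) :
    win c ((n:ℤ)-2) =
      ![c ((n:ℤ)-6), c ((n:ℤ)-5), c ((n:ℤ)-4), c ((n:ℤ)-3),
        c ((n:ℤ)-2), c ((n:ℤ)-1), false, false, false] := by
  funext m
  fin_cases m <;>
    first
      | (show c _ = false; exact hcfg _ (by omega))
      | (show c _ = c _; (congr 1 <;> ring))

lemma winacc3 {n : ℕ} (hn : 4 ≤ n) {c : ℤ → Bool} (hcfg : TwoStoryConfig n c) :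
    win c ((n:ℤ)-1) =
      ![c ((n:ℤ)-5), c ((n:ℤ)-4), c ((n:ℤ)-3), c ((n:ℤ)-2),
        c ((n:ℤ)-1), false, false, false, false] := by
  funext m
  fin_cases m <;>
    first
      | (show c _ = false; exact hcfg _ (by omega))
      | (show c _ = c _; (congr 1 <;> ring))

lemma nat_card_sigma {ι : Type*} [Fintype ι] {α : ι → Type*} [∀ i, Finite (α i)] :
    Nat.card (Σ i, α i) = ∑ i, Nat.card (α i) := by
  classical
  letI : ∀ i, Fintype (α i) := fun i => Fintype.ofFinite _
  simp [Nat.card_eq_fintype_card, Fintype.card_sigma]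

lemma accS_st {n : ℕ} (hn : 4 ≤ n) {c : ℤ → Bool} (hcfg : TwoStoryConfig n c) :
    AccS (st n c) =
      (WF (win c ((n:ℤ)-4)) && WF (win c ((n:ℤ)-3)) &&
       WF (win c ((n:ℤ)-2)) && WF (win c ((n:ℤ)-1))) := by
  rw [winacc0 hn hcfg, winacc1 hn hcfg, winacc2 hn hcfg, winacc3 hn hcfg]
  rfl

lemma QB_all_iff {n : ℕ} (hn : 4 ≤ n) {c : ℤ → Bool} (hcfg : TwoStoryConfig n c)
    (hpg : ∀ j : ℤ, 0 ≤ j → j + 5 ≤ (n:ℤ) → QB c j) :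
    (∀ j : ℤ, 0 ≤ j → j < (n:ℤ) → QB c j) ↔ AccS (st n c) = true := by
  rw [accS_st hn hcfg]
  simp only [Bool.and_eq_true]
  constructor
  · intro h
    have hn' : (4:ℤ) ≤ (n:ℤ) := by exact_mod_cast hn
    exact ⟨⟨⟨h _ (by omega) (by omega), h _ (by omega) (by omega)⟩,
      h _ (by omega) (by omega)⟩, h _ (by omega) (by omega)⟩
  · rintro ⟨⟨⟨h1, h2⟩, h3⟩, h4⟩ j hj0 hjn
    rcases (by omega : j + 5 ≤ (n:ℤ) ∨ j = (n:ℤ)-4 ∨ j = (n:ℤ)-3 ∨ j = (n:ℤ)-2 ∨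
        j = (n:ℤ)-1) with h|h|h|h|h
    · exact hpg j hj0 h
    all_goals subst h
    · exact h1
    · exact h2
    · exact h3
    · exact h4

lemma count_formula {n : ℕ} (hn : 4 ≤ n) :
    twoStoryCount n = ∑ s : Fin 8 → Bool, (if AccS s = true then NN n s else 0) := by
  unfold twoStoryCount
  have e : ∀ c : ℤ → Bool,
      (TwoStoryConfig n c ∧ TwoStoryMaximal n c) ↔ (PG n c ∧ AccS (st n c) = true) := by
    intro c
    constructor
    · rintro ⟨hc, hm⟩
      have hq := (riviera_maximal_iff hc).1 hm
      have hpg : ∀ j : ℤ, 0 ≤ j → j + 5 ≤ (n:ℤ) → QB c j :=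
        fun j h1 h2 => hq j h1 (by omega)
      exact ⟨⟨hc, hpg⟩, (QB_all_iff hn hc hpg).1 hq⟩
    · rintro ⟨⟨hc, hpg⟩, hacc⟩
      exact ⟨hc, (riviera_maximal_iff hc).2 ((QB_all_iff hn hc hpg).2 hacc)⟩
  rw [Nat.card_congr (Equiv.subtypeEquivRight e)]
  haveI hF : Finite {c : ℤ → Bool // PG n c ∧ AccS (st n c) = true} :=
    finite_sub (fun c h => h.1.1)
  rw [Nat.card_congr (Equiv.sigmaFiberEquiv
    (fun x : {c : ℤ → Bool // PG n c ∧ AccS (st n c) = true} => st n x.1)).symm]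
  rw [nat_card_sigma]
  apply Finset.sum_congr rfl
  intro s _
  by_cases hA : AccS s = true
  · rw [if_pos hA]
    apply Nat.card_congr
    refine (Equiv.subtypeSubtypeEquivSubtypeInter
        (fun c : ℤ → Bool => PG n c ∧ AccS (st n c) = true)
        (fun c => st n c = s)).trans
      (Equiv.subtypeEquivRight fun c => ?_)
    constructor
    · rintro ⟨⟨h1, _⟩, h3⟩; exact ⟨h1, h3⟩
    · rintro ⟨h1, h3⟩; exact ⟨⟨h1, h3 ▸ hA⟩, h3⟩
  · rw [if_neg hA]
    have : IsEmpty {x : {c : ℤ → Bool // PG n c ∧ AccS (st n c) = true} //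
        st n x.1 = s} := ⟨fun x => hA (x.2 ▸ x.1.2.2)⟩
    exact Nat.card_of_isEmpty


end Acceptance


section DP

def sB (i : ℕ) : Fin 8 → Bool :=
  ![i % 2 == 1, i / 2 % 2 == 1, i / 4 % 2 == 1, i / 8 % 2 == 1,
    i / 16 % 2 == 1, i / 32 % 2 == 1, i / 64 % 2 == 1, i / 128 % 2 == 1]

def W0L : List Bool := [false, false, false, false, false, true, true, true, false, false, true, true, true, true, true, true, true, true, true, true, true, true, true, true, true, true, true, true, true, true, true, true, false, false, false, false, true, true, true, true, true, true, true, true, true, true, true, true, true, true, true, true, false, false, false, false, false, false, false, false, false, false, false, false, false, false, false, false, true, true, true, true, true, true, true, true, true, true, true, true, true, true, true, true, false, false, false, false, false, false, false, false, false, false, false, false, true, true, true, true, true, true, true, true, true, true, true, true, true, true, true, true, true, true, true, true, false, false, false, false, false, false, false, false, false, false, false, false, false, false, false, false, false, true, true, true, false, false, true, true, true, true, true, true, true, true, true, true, true, true, true, true, true, true, true, true, true, true, true, true, true, true, true, true, true, true, true, true, true, true, true, true, true, true, true, true, true, true, true, true, false, false, false, false, false, false, false, false, false, false, false, false, true, true,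 true, true, true, true, true, true, true, true, true, true, true, true, true, true, true, true, true, true, false, false, false, false, false, false, false, false, false, false, false, false, true, true, true, true, true, true, true, true, true, true, true, true, true, true, true, true, true, true, true, true, false, false, false, false, false, false, false, false, false, false, false, false]
def W1L : List Bool := [false, false, false, false, false, true, true, true, false, false, true, true, true, true, true, true, true, true, true, true, true, true, true, true, true, true, true, true, true, true, true, true, false, false, false, false, true, true, true, true, true, true, true, true, true, true, true, true, true, true, true, true, false, false, false, false, false, false, false, false, false, false, false, false, true, true, true, true, true, true, true, true, true, true, true, true, true, true, true, true, true, true, true, true, false, false, false, false, false, false, false, false, false, false, false, false, true, true, true, true, true, true, true, true, true, true, true, true, true, true, true, true, true, true, true, true, false, false, false, false, false, false, false, false, false, false, false, false, false, false, false, false, false, true, true, true, false, false, true, true, true, true, true, true, true, true, true, true, true, true, true, true, true, true, true, true, true, true, true, true, true, true, true, true, true, true, true, true, true, true, true, true, true, true, true, true, true, true, true, true, false, false, false, false, false, false, false, false, false, false, false, false, true, true, true, true, true, true, true, true, true, true, true, true, true, true, true, true, true, true, true, true, false, false, false, false, false, false, false, false, false, false, false, false, true, true, true, true, true, true, true, true,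 true, true, true, true, true, true, true, true, true, true, true, true, false, false, false, false, false, false, false, false, false, false, false, false]
def ACCL : List Bool := [false, false, false, true, false, true, true, false, false, true, true, false, true, false, false, false, false, false, false, true, true, false, false, false, false, true, false, false, false, false, false, false, false, false, false, true, false, true, true, false, false, true, false, false, false, false, false, false, false, false, false, true, true, false, false, false, false, true, false, false, false, false, false, false, false, false, false, true, false, true, true, false, false, true, true, false, true, false, false, false, false, false, false, true, true, false, false, false, false, true, false, false, false, false, false, false, false, false, false, true, false, true, true, false, false, true, false, false, false, false, false, false, false, false, false, true, true, false, false, false, false, true, false, false, false, false, false, false, false, false, false, true, false, true, true, false, false, true, true, false, true, false, false, false, false, false, false, true, true, false, false, false, false, true, false, false, false, false, false, false, false, false, false, true, false, true, true, false, false, true, false, false, false, false, false, false, false, false, false, true, true, false, false, false, false, true, false, false, false, false, false, false, false, false, false, true, false, true, true, false, false, true, true, false, true, false, false, false, false, false, false, true, true, false, false, false, false, true, false, false, false, false, false, false, false, false, false, true, false, true, true, false, false, true, false, false, false, false, false, false, false, false, false, true, true, false, false, false, false, true, false, false, false, false, false, false]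
def L0 : List Nat := [1, 1, 1, 1, 1, 1, 1, 1, 1, 1, 1, 1, 1, 1, 1, 1, 0, 0, 0, 0, 0, 0, 0, 0, 0, 0, 0, 0, 0, 0, 0, 0, 0, 0, 0, 0, 0, 0, 0, 0, 0, 0, 0, 0, 0, 0, 0, 0, 0, 0, 0, 0, 0, 0, 0, 0, 0, 0, 0, 0, 0, 0, 0, 0, 0, 0, 0, 0, 0, 0, 0, 0, 0, 0, 0, 0, 0, 0, 0, 0, 0, 0, 0, 0, 0, 0, 0, 0, 0, 0, 0, 0, 0, 0, 0, 0, 0, 0, 0, 0, 0, 0, 0, 0, 0, 0, 0, 0, 0, 0, 0, 0, 0, 0, 0, 0, 0, 0, 0, 0, 0, 0, 0, 0, 0, 0, 0, 0, 0, 0, 0, 0, 0, 0, 0, 0, 0, 0, 0, 0, 0, 0, 0, 0, 0, 0, 0, 0, 0, 0, 0, 0, 0, 0, 0, 0, 0, 0, 0, 0, 0, 0, 0, 0, 0, 0, 0, 0, 0, 0, 0, 0, 0, 0, 0, 0, 0, 0, 0, 0, 0, 0, 0, 0, 0, 0, 0, 0, 0, 0, 0, 0, 0, 0, 0, 0, 0,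 0, 0, 0, 0, 0, 0, 0, 0, 0, 0, 0, 0, 0, 0, 0, 0, 0, 0, 0, 0, 0, 0, 0, 0, 0, 0, 0, 0, 0, 0, 0, 0, 0, 0, 0, 0, 0, 0, 0, 0, 0, 0, 0, 0, 0, 0, 0, 0, 0, 0, 0, 0, 0, 0, 0, 0, 0, 0, 0]
def L1 : List Nat := [0, 0, 0, 0, 0, 1, 1, 1, 0, 0, 1, 1, 1, 1, 1, 1, 1, 1, 1, 1, 1, 1, 1, 1, 1, 1, 1, 1, 1, 1, 1, 1, 0, 0, 0, 0, 0, 0, 0, 0, 0, 0, 0, 0, 0, 0, 0, 0, 0, 0, 0, 0, 0, 0, 0, 0, 0, 0, 0, 0, 0, 0, 0, 0, 0, 0, 0, 0, 0, 0, 0, 0, 0, 0, 0, 0, 0, 0, 0, 0, 0, 0, 0, 0, 0, 0, 0, 0, 0, 0, 0, 0, 0, 0, 0, 0, 0, 0, 0, 0, 0, 0, 0, 0, 0, 0, 0, 0, 0, 0, 0, 0, 0, 0, 0, 0, 0, 0, 0, 0, 0, 0, 0, 0, 0, 0, 0, 0, 0, 0, 0, 0, 0, 0, 0, 0, 0, 0,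 0, 0, 0, 0, 0, 0, 0, 0, 0, 0, 0, 0, 0, 0, 0, 0, 0, 0, 0, 0, 0, 0, 0, 0, 0, 0, 0, 0, 0, 0, 0, 0, 0, 0, 0, 0, 0, 0, 0, 0, 0, 0, 0, 0, 0, 0, 0, 0, 0, 0, 0, 0, 0, 0, 0, 0, 0, 0, 0, 0, 0, 0, 0, 0, 0, 0, 0, 0, 0, 0, 0, 0, 0, 0, 0, 0, 0, 0, 0, 0, 0, 0, 0, 0, 0, 0, 0, 0, 0, 0, 0, 0, 0, 0, 0, 0, 0, 0, 0, 0, 0, 0, 0, 0, 0, 0, 0, 0, 0, 0, 0, 0, 0, 0, 0, 0, 0, 0]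
def L2 : List Nat := [0, 0, 0, 0, 0, 0, 0, 0, 0, 0, 1, 1, 1, 1, 1, 1, 0, 0, 0, 0, 1, 1, 1, 1, 1, 1, 1, 1, 1, 1, 1, 1, 0, 0, 0, 0, 1, 1, 1, 1, 1, 1, 1, 1, 1, 1, 1, 1, 1, 1, 1, 1, 0, 0, 0, 0, 0, 0, 0, 0, 0, 0, 0, 0, 0, 0, 0, 0, 0, 0, 0, 0, 0, 0, 0, 0, 0, 0, 0, 0, 0, 0, 0, 0, 0, 0, 0, 0, 0, 0, 0, 0, 0, 0, 0, 0, 0, 0, 0, 0, 0, 0, 0, 0, 0, 0, 0, 0, 0, 0, 0, 0, 0, 0, 0, 0, 0, 0, 0, 0, 0, 0, 0, 0, 0, 0, 0, 0, 0, 0, 0, 0, 0, 0, 0, 0, 0, 0, 0, 0, 0, 0, 0, 0, 0, 0, 0, 0, 0, 0, 0, 0, 0, 0, 0, 0, 0, 0, 0, 0, 0, 0, 0, 0, 0, 0, 0, 0, 0, 0, 0, 0, 0, 0, 0, 0, 0, 0, 0, 0, 0, 0, 0, 0, 0, 0, 0, 0, 0, 0, 0, 0, 0, 0, 0, 0, 0,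 0, 0, 0, 0, 0, 0, 0, 0, 0, 0, 0, 0, 0, 0, 0, 0, 0, 0, 0, 0, 0, 0, 0, 0, 0, 0, 0, 0, 0, 0, 0, 0, 0, 0, 0, 0, 0, 0, 0, 0, 0, 0, 0, 0, 0, 0, 0, 0, 0, 0, 0, 0, 0, 0, 0, 0, 0, 0, 0]
def L3 : List Nat := [0, 0, 0, 0, 0, 0, 0, 0, 0, 0, 0, 0, 0, 0, 0, 0, 0, 0, 0, 0, 1, 1, 1, 1, 1, 1, 1, 1, 1, 1, 1, 1, 0, 0, 0, 0, 0, 0, 0, 0, 1, 1, 1, 1, 1, 1, 1, 1, 1, 1, 1, 1, 0, 0, 0, 0, 0, 0, 0, 0, 0, 0, 0, 0, 0, 0, 0, 0, 0, 0, 0, 0, 1, 1, 1, 1, 1, 1, 1, 1, 1, 1, 1, 1, 0, 0, 0, 0, 0, 0, 0, 0, 0, 0, 0, 0, 1, 1, 1, 1, 1, 1, 1, 1, 0, 0, 0, 0, 0, 0, 0, 0, 0, 0, 0, 0, 0, 0, 0, 0, 0, 0, 0, 0, 0, 0, 0, 0, 0, 0, 0, 0, 0, 0, 0, 0, 0, 0,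 0, 0, 0, 0, 0, 0, 0, 0, 0, 0, 0, 0, 0, 0, 0, 0, 0, 0, 0, 0, 0, 0, 0, 0, 0, 0, 0, 0, 0, 0, 0, 0, 0, 0, 0, 0, 0, 0, 0, 0, 0, 0, 0, 0, 0, 0, 0, 0, 0, 0, 0, 0, 0, 0, 0, 0, 0, 0, 0, 0, 0, 0, 0, 0, 0, 0, 0, 0, 0, 0, 0, 0, 0, 0, 0, 0, 0, 0, 0, 0, 0, 0, 0, 0, 0, 0, 0, 0, 0, 0, 0, 0, 0, 0, 0, 0, 0, 0, 0, 0, 0, 0, 0, 0, 0, 0, 0, 0, 0, 0, 0, 0, 0, 0, 0, 0, 0, 0]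
def L4 : List Nat := [0, 0, 0, 0, 0, 0, 0, 0, 0, 0, 0, 0, 0, 0, 0, 0, 0, 0, 0, 0, 0, 0, 0, 0, 0, 0, 0, 0, 0, 0, 0, 0, 0, 0, 0, 0, 0, 0, 0, 0, 1, 1, 1, 1, 1, 1, 1, 1, 1, 1, 1, 1, 0, 0, 0, 0, 0, 0, 0, 0, 0, 0, 0, 0, 0, 0, 0, 0, 0, 0, 0, 0, 0, 0, 0, 0, 0, 0, 0, 0, 1, 1, 1, 1, 0, 0, 0, 0, 0, 0, 0, 0, 0, 0, 0, 0, 1, 1, 1, 1, 1, 1, 1, 1, 0, 0, 0, 0, 0, 0, 0, 0, 0, 0, 0, 0, 0, 0, 0, 0, 0, 0, 0, 0, 0, 0, 0, 0, 0, 0, 0, 0, 0, 0, 0, 0, 0, 0, 0, 0, 0, 0, 0, 0, 1, 1, 1, 1, 1, 1, 1, 1, 1, 1, 1, 1, 1, 1, 1, 1, 1, 1, 1, 1, 1, 1, 1, 1, 0, 0, 0, 0, 0, 0, 0, 0, 0, 0, 0, 0, 0, 0, 0, 0, 0, 0, 0, 0, 0, 0, 0, 0, 1, 1, 1, 1, 1,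 1, 1, 1, 1, 1, 1, 1, 1, 1, 1, 1, 0, 0, 0, 0, 0, 0, 0, 0, 0, 0, 0, 0, 0, 0, 0, 0, 0, 0, 0, 0, 0, 0, 0, 0, 0, 0, 0, 0, 0, 0, 0, 0, 0, 0, 0, 0, 0, 0, 0, 0, 0, 0, 0, 0, 0, 0, 0, 0]
def L5 : List Nat := [0, 0, 0, 0, 0, 0, 0, 0, 0, 0, 0, 0, 0, 0, 0, 0, 0, 0, 0, 0, 0, 0, 0, 0, 0, 0, 0, 0, 0, 0, 0, 0, 0, 0, 0, 0, 1, 1, 1, 1, 1, 1, 1, 1, 1, 1, 1, 1, 1, 1, 1, 1, 0, 0, 0, 0, 0, 0, 0, 0, 0, 0, 0, 0, 1, 1, 1, 1, 1, 1, 1, 1, 1, 1, 1, 1, 1, 1, 1, 1, 1, 1, 1, 1, 0, 0, 0, 0, 0, 0, 0, 0, 0, 0, 0, 0, 1, 1, 1, 1, 1, 1, 1, 1, 0, 0, 0, 0, 0, 0, 0, 0, 0, 0, 0, 0, 0, 0, 0, 0, 0, 0, 0, 0, 0, 0, 0, 0, 0, 0, 0, 0, 0, 1, 1, 1, 0, 0,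 1, 1, 1, 1, 1, 1, 1, 1, 1, 1, 1, 1, 1, 1, 1, 1, 1, 1, 1, 1, 1, 1, 1, 1, 1, 1, 1, 1, 1, 1, 0, 0, 0, 0, 0, 0, 0, 0, 0, 0, 0, 0, 0, 0, 0, 0, 0, 0, 0, 0, 0, 0, 0, 0, 1, 1, 1, 1, 1, 1, 1, 1, 1, 1, 1, 1, 1, 1, 1, 1, 0, 0, 0, 0, 0, 0, 0, 0, 0, 0, 0, 0, 0, 0, 0, 0, 0, 0, 0, 0, 0, 0, 0, 0, 0, 0, 0, 0, 0, 0, 0, 0, 0, 0, 0, 0, 0, 0, 0, 0, 0, 0, 0, 0, 0, 0, 0, 0]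
def L6 : List Nat := [0, 0, 0, 0, 0, 0, 0, 0, 0, 0, 1, 1, 1, 1, 1, 1, 0, 0, 0, 0, 1, 1, 1, 1, 1, 1, 1, 1, 1, 1, 1, 1, 0, 0, 0, 0, 1, 1, 1, 1, 1, 1, 1, 1, 1, 1, 1, 1, 1, 1, 1, 1, 0, 0, 0, 0, 0, 0, 0, 0, 0, 0, 0, 0, 1, 1, 1, 1, 1, 1, 1, 1, 2, 2, 2, 2, 2, 2, 2, 2, 1, 1, 1, 1, 0, 0, 0, 0, 0, 0, 0, 0, 0, 0, 0, 0, 1, 1, 1, 1, 1, 1, 1, 1, 0, 0, 0, 0, 0, 0, 0, 0, 0, 0, 0, 0, 0, 0, 0, 0, 0, 0, 0, 0, 0, 0, 0, 0, 0, 0, 0, 0, 0, 2, 2, 2, 0, 0, 2, 2, 2, 2, 2, 2, 2, 2, 2, 2, 2, 2, 2, 2, 2, 2, 2, 2, 2, 2, 2, 2, 1, 1, 1, 1, 1, 1, 1, 1, 0, 0, 0, 0, 0, 0, 0, 0, 0, 0, 0, 0, 0, 0, 0, 0, 0, 0, 0, 0, 0, 0, 0, 0, 1, 1, 1, 1, 1,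 1, 1, 1, 1, 1, 1, 1, 1, 1, 1, 1, 0, 0, 0, 0, 0, 0, 0, 0, 0, 0, 0, 0, 0, 0, 0, 0, 0, 0, 0, 0, 0, 0, 0, 0, 0, 0, 0, 0, 0, 0, 0, 0, 0, 0, 0, 0, 0, 0, 0, 0, 0, 0, 0, 0, 0, 0, 0, 0]
def L7 : List Nat := [0, 0, 0, 0, 0, 0, 0, 0, 0, 0, 2, 2, 2, 2, 2, 2, 0, 0, 0, 0, 3, 3, 3, 3, 3, 3, 3, 3, 3, 3, 3, 3, 0, 0, 0, 0, 2, 2, 2, 2, 3, 3, 3, 3, 3, 3, 3, 3, 3, 3, 3, 3, 0, 0, 0, 0, 0, 0, 0, 0, 0, 0, 0, 0, 1, 1, 1, 1, 1, 1, 1, 1, 2, 2, 2, 2, 2, 2, 2, 2, 1, 1, 1, 1, 0, 0, 0, 0, 0, 0, 0, 0, 0, 0, 0, 0, 1, 1, 1, 1, 1, 1, 1, 1, 0, 0, 0, 0, 0, 0, 0, 0, 0, 0, 0, 0, 0, 0, 0, 0, 0, 0, 0, 0, 0, 0, 0, 0, 0, 0, 0, 0, 0, 2, 2, 2, 0, 0,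 2, 2, 2, 2, 2, 2, 3, 3, 3, 3, 3, 3, 3, 3, 3, 3, 3, 3, 3, 3, 3, 3, 1, 1, 1, 1, 1, 1, 1, 1, 0, 0, 0, 0, 0, 0, 0, 0, 0, 0, 0, 0, 0, 0, 0, 0, 0, 0, 0, 0, 0, 0, 0, 0, 1, 1, 1, 1, 1, 1, 1, 1, 1, 1, 1, 1, 1, 1, 1, 1, 0, 0, 0, 0, 0, 0, 0, 0, 0, 0, 0, 0, 0, 0, 0, 0, 0, 0, 0, 0, 0, 0, 0, 0, 0, 0, 0, 0, 0, 0, 0, 0, 0, 0, 0, 0, 0, 0, 0, 0, 0, 0, 0, 0, 0, 0, 0, 0]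
def L8 : List Nat := [0, 0, 0, 0, 0, 0, 0, 0, 0, 0, 2, 2, 2, 2, 2, 2, 0, 0, 0, 0, 4, 4, 4, 4, 4, 4, 4, 4, 4, 4, 4, 4, 0, 0, 0, 0, 3, 3, 3, 3, 6, 6, 6, 6, 6, 6, 6, 6, 6, 6, 6, 6, 0, 0, 0, 0, 0, 0, 0, 0, 0, 0, 0, 0, 1, 1, 1, 1, 1, 1, 1, 1, 3, 3, 3, 3, 3, 3, 3, 3, 3, 3, 3, 3, 0, 0, 0, 0, 0, 0, 0, 0, 0, 0, 0, 0, 3, 3, 3, 3, 3, 3, 3, 3, 0, 0, 0, 0, 0, 0, 0, 0, 0, 0, 0, 0, 0, 0, 0, 0, 0, 0, 0, 0, 0, 0, 0, 0, 0, 0, 0, 0, 0, 2, 2, 2, 0, 0, 2, 2, 2, 2, 2, 2, 3, 3, 3, 3, 3, 3, 3, 3, 3, 3, 3, 3, 3, 3, 3, 3, 1, 1, 1, 1, 1, 1, 1, 1, 0, 0, 0, 0, 0, 0, 0, 0, 0, 0, 0, 0, 0, 0, 0, 0, 0, 0, 0, 0, 0, 0, 0, 0, 1, 1, 1, 1, 1,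 1, 1, 1, 1, 1, 1, 1, 1, 1, 1, 1, 0, 0, 0, 0, 0, 0, 0, 0, 0, 0, 0, 0, 0, 0, 0, 0, 0, 0, 0, 0, 0, 0, 0, 0, 0, 0, 0, 0, 0, 0, 0, 0, 0, 0, 0, 0, 0, 0, 0, 0, 0, 0, 0, 0, 0, 0, 0, 0]
def L9 : List Nat := [0, 0, 0, 0, 0, 0, 0, 0, 0, 0, 2, 2, 2, 2, 2, 2, 0, 0, 0, 0, 4, 4, 4, 4, 4, 4, 4, 4, 4, 4, 4, 4, 0, 0, 0, 0, 3, 3, 3, 3, 7, 7, 7, 7, 7, 7, 7, 7, 7, 7, 7, 7, 0, 0, 0, 0, 0, 0, 0, 0, 0, 0, 0, 0, 1, 1, 1, 1, 1, 1, 1, 1, 4, 4, 4, 4, 4, 4, 4, 4, 6, 6, 6, 6, 0, 0, 0, 0, 0, 0, 0, 0, 0, 0, 0, 0, 6, 6, 6, 6, 6, 6, 6, 6, 0, 0, 0, 0, 0, 0, 0, 0, 0, 0, 0, 0, 0, 0, 0, 0, 0, 0, 0, 0, 0, 0, 0, 0, 0, 0, 0, 0, 0, 2, 2, 2, 0, 0,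 2, 2, 2, 2, 2, 2, 4, 4, 4, 4, 4, 4, 4, 4, 4, 4, 4, 4, 4, 4, 4, 4, 3, 3, 3, 3, 3, 3, 3, 3, 0, 0, 0, 0, 0, 0, 0, 0, 0, 0, 0, 0, 0, 0, 0, 0, 0, 0, 0, 0, 0, 0, 0, 0, 3, 3, 3, 3, 3, 3, 3, 3, 3, 3, 3, 3, 3, 3, 3, 3, 0, 0, 0, 0, 0, 0, 0, 0, 0, 0, 0, 0, 0, 0, 0, 0, 0, 0, 0, 0, 0, 0, 0, 0, 0, 0, 0, 0, 0, 0, 0, 0, 0, 0, 0, 0, 0, 0, 0, 0, 0, 0, 0, 0, 0, 0, 0, 0]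
def L10 : List Nat := [0, 0, 0, 0, 0, 0, 0, 0, 0, 0, 2, 2, 2, 2, 2, 2, 0, 0, 0, 0, 4, 4, 4, 4, 4, 4, 4, 4, 4, 4, 4, 4, 0, 0, 0, 0, 4, 4, 4, 4, 8, 8, 8, 8, 8, 8, 8, 8, 8, 8, 8, 8, 0, 0, 0, 0, 0, 0, 0, 0, 0, 0, 0, 0, 3, 3, 3, 3, 3, 3, 3, 3, 6, 6, 6, 6, 6, 6, 6, 6, 7, 7, 7, 7, 0, 0, 0, 0, 0, 0, 0, 0, 0, 0, 0, 0, 7, 7, 7, 7, 7, 7, 7, 7, 0, 0, 0, 0, 0, 0, 0, 0, 0, 0, 0, 0, 0, 0, 0, 0, 0, 0, 0, 0, 0, 0, 0, 0, 0, 0, 0, 0, 0, 4, 4, 4, 0, 0, 4, 4, 4, 4, 4, 4, 7, 7, 7, 7, 7, 7, 7, 7, 7, 7, 7, 7, 7, 7, 7, 7, 6, 6, 6, 6, 6, 6, 6, 6, 0, 0, 0, 0, 0, 0, 0, 0, 0, 0, 0, 0, 0, 0, 0, 0, 0, 0, 0, 0, 0, 0, 0, 0, 6, 6, 6, 6, 6,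 6, 6, 6, 6, 6, 6, 6, 6, 6, 6, 6, 0, 0, 0, 0, 0, 0, 0, 0, 0, 0, 0, 0, 0, 0, 0, 0, 0, 0, 0, 0, 0, 0, 0, 0, 0, 0, 0, 0, 0, 0, 0, 0, 0, 0, 0, 0, 0, 0, 0, 0, 0, 0, 0, 0, 0, 0, 0, 0]
def L11 : List Nat := [0, 0, 0, 0, 0, 0, 0, 0, 0, 0, 4, 4, 4, 4, 4, 4, 0, 0, 0, 0, 6, 6, 6, 6, 6, 6, 6, 6, 6, 6, 6, 6, 0, 0, 0, 0, 7, 7, 7, 7, 11, 11, 11, 11, 11, 11, 11, 11, 11, 11, 11, 11, 0, 0, 0, 0, 0, 0, 0, 0, 0, 0, 0, 0, 6, 6, 6, 6, 6, 6, 6, 6, 10, 10, 10, 10, 10, 10, 10, 10, 8, 8, 8, 8, 0, 0, 0, 0, 0, 0, 0, 0, 0, 0, 0, 0, 8, 8, 8, 8, 8, 8, 8, 8, 0, 0, 0, 0, 0, 0, 0, 0, 0, 0, 0, 0, 0, 0, 0, 0, 0, 0, 0, 0, 0, 0, 0, 0, 0, 0, 0, 0, 0, 9, 9, 9, 0, 0,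 9, 9, 9, 9, 9, 9, 12, 12, 12, 12, 12, 12, 12, 12, 12, 12, 12, 12, 12, 12, 12, 12, 7, 7, 7, 7, 7, 7, 7, 7, 0, 0, 0, 0, 0, 0, 0, 0, 0, 0, 0, 0, 0, 0, 0, 0, 0, 0, 0, 0, 0, 0, 0, 0, 7, 7, 7, 7, 7, 7, 7, 7, 7, 7, 7, 7, 7, 7, 7, 7, 0, 0, 0, 0, 0, 0, 0, 0, 0, 0, 0, 0, 0, 0, 0, 0, 0, 0, 0, 0, 0, 0, 0, 0, 0, 0, 0, 0, 0, 0, 0, 0, 0, 0, 0, 0, 0, 0, 0, 0, 0, 0, 0, 0, 0, 0, 0, 0]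
def L12 : List Nat := [0, 0, 0, 0, 0, 0, 0, 0, 0, 0, 9, 9, 9, 9, 9, 9, 0, 0, 0, 0, 13, 13, 13, 13, 13, 13, 13, 13, 13, 13, 13, 13, 0, 0, 0, 0, 12, 12, 12, 12, 18, 18, 18, 18, 18, 18, 18, 18, 18, 18, 18, 18, 0, 0, 0, 0, 0, 0, 0, 0, 0, 0, 0, 0, 7, 7, 7, 7, 7, 7, 7, 7, 14, 14, 14, 14, 14, 14, 14, 14, 11, 11, 11, 11, 0, 0, 0, 0, 0, 0, 0, 0, 0, 0, 0, 0, 11, 11, 11, 11, 11, 11, 11, 11, 0, 0, 0, 0, 0, 0, 0, 0, 0, 0, 0, 0, 0, 0, 0, 0, 0, 0, 0, 0, 0, 0, 0, 0, 0, 0, 0, 0, 0, 13, 13, 13, 0, 0, 13, 13, 13, 13, 13, 13, 17, 17, 17, 17, 17, 17, 17, 17, 17, 17, 17, 17, 17, 17, 17, 17, 8, 8, 8, 8, 8, 8, 8, 8, 0, 0, 0, 0, 0, 0, 0, 0, 0, 0, 0, 0, 0, 0, 0, 0, 0, 0, 0, 0, 0, 0, 0, 0, 8, 8, 8, 8, 8,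 8, 8, 8, 8, 8, 8, 8, 8, 8, 8, 8, 0, 0, 0, 0, 0, 0, 0, 0, 0, 0, 0, 0, 0, 0, 0, 0, 0, 0, 0, 0, 0, 0, 0, 0, 0, 0, 0, 0, 0, 0, 0, 0, 0, 0, 0, 0, 0, 0, 0, 0, 0, 0, 0, 0, 0, 0, 0, 0]

def tr (v : List ℕ) (i : ℕ) : ℕ :=
  (if W0L.getD i false then v.getD (i / 2) 0 else 0) +
  (if W1L.getD i false then v.getD (i / 2 + 128) 0 else 0)
def stepL (v : List ℕ) : List ℕ := (List.range 256).map (tr v)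
def fDP : ℕ → List ℕ
  | 0 => L0
  | (k+1) => stepL (fDP k)
def AC (k : ℕ) : ℕ :=
  ∑ i : Fin 256, (if ACCL.getD i.1 false then (fDP k).getD i.1 0 else 0)

lemma W0L_eq : ∀ i : Fin 256, W0L.getD i.1 false = WF (stepWin (sB i.1) false) := by decide
lemma W1L_eq : ∀ i : Fin 256, W1L.getD i.1 false = WF (stepWin (sB i.1) true) := by decide
lemma ACCL_eq : ∀ i : Fin 256, ACCL.getD i.1 false = AccS (sB i.1) := by decide
lemma prevS_sB : ∀ i : Fin 256, ∀ b : Bool,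
    prevS (sB i.1) b = sB (i.1 / 2 + if b then 128 else 0) := by decide
lemma base_eq : ∀ i : Fin 256,
    (if (sB i.1 4 || sB i.1 5 || sB i.1 6 || sB i.1 7) then 0 else 1 : ℕ) =
      L0.getD i.1 0 := by decide

lemma stepL_getD (v : List ℕ) {i : ℕ} (h : i < 256) :
    (stepL v).getD i 0 = tr v i := by
  unfold stepL
  rw [List.getD_eq_getElem?_getD, List.getElem?_map, List.getElem?_range h]
  rfl

lemma NN_eq : ∀ k : ℕ, ∀ i : ℕ, i < 256 → NN (4+k) (sB i) = (fDP k).getD i 0 := by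
  intro k
  induction k with
  | zero =>
    intro i h
    rw [NN_base]
    exact base_eq ⟨i, h⟩
  | succ k ih =>
    intro i h
    have h2 : i / 2 < 256 := by omega
    have h2' : i / 2 + 128 < 256 := by omega
    show NN ((4+k)+1) (sB i) = _
    rw [NN_step (by omega)]
    have hp0 := prevS_sB ⟨i, h⟩ false
    have hp1 := prevS_sB ⟨i, h⟩ true
    simp only at hp0 hp1
    rw [hp0, hp1]
    show (if WF (stepWin (sB i) false) = true then NN (4+k) (sB (i/2)) else 0) +
      (if WF (stepWin (sB i) true) = true then NN (4+k) (sB (i/2+128)) else 0) = _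
    rw [ih _ h2, ih _ h2']
    show _ = (stepL (fDP k)).getD i 0
    rw [stepL_getD _ h]
    unfold tr
    rw [W0L_eq ⟨i, h⟩, W1L_eq ⟨i, h⟩]

def gB (s : Fin 8 → Bool) : ℕ :=
  (if s 0 then 1 else 0) + 2 * (if s 1 then 1 else 0) + 4 * (if s 2 then 1 else 0) +
  8 * (if s 3 then 1 else 0) + 16 * (if s 4 then 1 else 0) + 32 * (if s 5 then 1 else 0) +
  64 * (if s 6 then 1 else 0) + 128 * (if s 7 then 1 else 0)

lemma gB_sB : ∀ i : Fin 256, gB (sB i.1) = i.1 := by decide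

lemma sB_bij : Function.Bijective (fun i : Fin 256 => sB i.1) := by
  rw [Fintype.bijective_iff_injective_and_card]
  constructor
  · intro a b h
    have : gB (sB a.1) = gB (sB b.1) := congrArg gB h
    rw [gB_sB, gB_sB] at this
    exact Fin.ext this
  · simp

lemma count_AC (k : ℕ) : twoStoryCount (4 + k) = AC k := by
  rw [count_formula (by omega)]
  unfold AC
  refine (Fintype.sum_bijective _ sB_bij _ _ fun i => ?_).symm
  rw [ACCL_eq i, NN_eq k i.1 i.2]

end DP


section Numeric

lemma fDPe1 : fDP 1 = L1 := by
  have h : stepL L0 = L1 := by decide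
  show stepL (fDP 0) = L1; exact h
lemma fDPe2 : fDP 2 = L2 := by
  have h : stepL L1 = L2 := by decide
  show stepL (fDP 1) = L2; rw [fDPe1]; exact h
lemma fDPe3 : fDP 3 = L3 := by
  have h : stepL L2 = L3 := by decide
  show stepL (fDP 2) = L3; rw [fDPe2]; exact h
lemma fDPe4 : fDP 4 = L4 := by
  have h : stepL L3 = L4 := by decide
  show stepL (fDP 3) = L4; rw [fDPe3]; exact h
lemma fDPe5 : fDP 5 = L5 := by
  have h : stepL L4 = L5 := by decide
  show stepL (fDP 4) = L5; rw [fDPe4]; exact h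
lemma fDPe6 : fDP 6 = L6 := by
  have h : stepL L5 = L6 := by decide
  show stepL (fDP 5) = L6; rw [fDPe5]; exact h
lemma fDPe7 : fDP 7 = L7 := by
  have h : stepL L6 = L7 := by decide
  show stepL (fDP 6) = L7; rw [fDPe6]; exact h
lemma fDPe8 : fDP 8 = L8 := by
  have h : stepL L7 = L8 := by decide
  show stepL (fDP 7) = L8; rw [fDPe7]; exact h
lemma fDPe9 : fDP 9 = L9 := by
  have h : stepL L8 = L9 := by decide
  show stepL (fDP 8) = L9; rw [fDPe8]; exact h
lemma fDPe10 : fDP 10 = L10 := by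
  have h : stepL L9 = L10 := by decide
  show stepL (fDP 9) = L10; rw [fDPe9]; exact h
lemma fDPe11 : fDP 11 = L11 := by
  have h : stepL L10 = L11 := by decide
  show stepL (fDP 10) = L11; rw [fDPe10]; exact h
lemma fDPe12 : fDP 12 = L12 := by
  have h : stepL L11 = L12 := by decide
  show stepL (fDP 11) = L12; rw [fDPe11]; exact h

lemma ACv0 : AC 0 = 6 := by unfold AC; decide
lemma ACv1 : AC 1 = 7 := by unfold AC; simp only [fDPe1]; decide
lemma ACv2 : AC 2 = 8 := by unfold AC; simp only [fDPe2]; decide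
lemma ACv3 : AC 3 = 11 := by unfold AC; simp only [fDPe3]; decide
lemma ACv4 : AC 4 = 18 := by unfold AC; simp only [fDPe4]; decide
lemma ACv5 : AC 5 = 30 := by unfold AC; simp only [fDPe5]; decide
lemma ACv6 : AC 6 = 44 := by unfold AC; simp only [fDPe6]; decide
lemma ACv7 : AC 7 = 59 := by unfold AC; simp only [fDPe7]; decide
lemma ACv8 : AC 8 = 80 := by unfold AC; simp only [fDPe8]; decide
lemma ACv9 : AC 9 = 118 := by unfold AC; simp only [fDPe9]; decide
lemma ACv10 : AC 10 = 182 := by unfold AC; simp only [fDPe10]; decide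
lemma ACv11 : AC 11 = 271 := by unfold AC; simp only [fDPe11]; decide

lemma fDP_succ_getD (k : ℕ) {i : ℕ} (h : i < 256) :
    (fDP (k+1)).getD i 0 = (if W0L.getD i false then (fDP k).getD (i / 2) 0 else 0) +
      (if W1L.getD i false then (fDP k).getD (i / 2 + 128) 0 else 0) := by
  show (stepL (fDP k)).getD i 0 = _
  rw [stepL_getD _ h]
  rfl

lemma CkeyBase : ∀ i : Fin 256,
    (fDP 12).getD i.1 0 + (fDP 4).getD i.1 0 + 2 * (fDP 3).getD i.1 0 + (fDP 2).getD i.1 0 =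
    (fDP 9).getD i.1 0 + (fDP 8).getD i.1 0 + 2 * (fDP 7).getD i.1 0 +
      2 * (fDP 6).getD i.1 0 + (fDP 5).getD i.1 0 := by
  simp only [fDPe12, fDPe9, fDPe8, fDPe7, fDPe6, fDPe5, fDPe4, fDPe3, fDPe2]
  decide

lemma Ckey : ∀ k : ℕ, ∀ i : ℕ, i < 256 →
    (fDP (k+12)).getD i 0 + (fDP (k+4)).getD i 0 + 2 * (fDP (k+3)).getD i 0 +
      (fDP (k+2)).getD i 0 =
    (fDP (k+9)).getD i 0 + (fDP (k+8)).getD i 0 + 2 * (fDP (k+7)).getD i 0 +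
      2 * (fDP (k+6)).getD i 0 + (fDP (k+5)).getD i 0 := by
  intro k
  induction k with
  | zero => intro i h; exact CkeyBase ⟨i, h⟩
  | succ k ih =>
    intro i h
    have h2 : i / 2 < 256 := by omega
    have h2' : i / 2 + 128 < 256 := by omega
    have H1 := ih (i/2) h2
    have H2 := ih (i/2+128) h2'
    rw [show k+1+12 = (k+12)+1 by ring, show k+1+4 = (k+4)+1 by ring,
      show k+1+3 = (k+3)+1 by ring, show k+1+2 = (k+2)+1 by ring,
      show k+1+9 = (k+9)+1 by ring, show k+1+8 = (k+8)+1 by ring,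
      show k+1+7 = (k+7)+1 by ring, show k+1+6 = (k+6)+1 by ring,
      show k+1+5 = (k+5)+1 by ring]
    rw [fDP_succ_getD _ h, fDP_succ_getD _ h, fDP_succ_getD _ h, fDP_succ_getD _ h,
      fDP_succ_getD _ h, fDP_succ_getD _ h, fDP_succ_getD _ h, fDP_succ_getD _ h,
      fDP_succ_getD _ h]
    cases hW0 : W0L.getD i false <;> cases hW1 : W1L.getD i false <;>
      simp only [hW0, hW1, if_true, if_false, Bool.false_eq_true] <;> omega

lemma AC_rec (k : ℕ) :
    AC (k+12) + AC (k+4) + 2 * AC (k+3) + AC (k+2) =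
    AC (k+9) + AC (k+8) + 2 * AC (k+7) + 2 * AC (k+6) + AC (k+5) := by
  unfold AC
  rw [Finset.mul_sum, Finset.mul_sum, Finset.mul_sum,
    ← Finset.sum_add_distrib, ← Finset.sum_add_distrib, ← Finset.sum_add_distrib,
    ← Finset.sum_add_distrib, ← Finset.sum_add_distrib, ← Finset.sum_add_distrib,
    ← Finset.sum_add_distrib]
  apply Finset.sum_congr rfl
  intro i _
  cases hA : ACCL.getD i.1 false
  · simp [hA]
  · simpa [hA] using Ckey k i.1 i.2

end Numeric

section Small

instance QB_dec (c : ℤ → Bool) (j : ℤ) : Decidable (QB c j) :=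
  inferInstanceAs (Decidable (_ = _))

def extF (n : ℕ) (v : Fin n → Bool) : ℤ → Bool :=
  fun j => if h : 0 ≤ j ∧ j < (n:ℤ) then v ⟨j.toNat, by omega⟩ else false

lemma extF_cfg (n : ℕ) (v : Fin n → Bool) : TwoStoryConfig n (extF n v) := by
  intro j hj
  unfold extF
  rw [dif_neg (by omega)]

lemma extF_restrict {n : ℕ} {c : ℤ → Bool} (hc : TwoStoryConfig n c) :
    extF n (fun k : Fin n => c (k:ℤ)) = c := by
  funext j
  unfold extF
  split
  · next h =>
    congr 1
    simp [Int.toNat_of_nonneg h.1]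
  · next h => exact (hc j (by omega)).symm

lemma count_small (n : ℕ) :
    twoStoryCount n =
      Fintype.card {v : Fin n → Bool // ∀ j : Fin n, QB (extF n v) (j:ℤ)} := by
  rw [twoStoryCount, ← Nat.card_eq_fintype_card]
  apply Nat.card_congr
  refine ⟨fun x => ⟨fun k => x.1 (k:ℤ), ?_⟩, fun y => ⟨extF n y.1, extF_cfg n y.1, ?_⟩,
    ?_, ?_⟩
  · intro j
    rw [extF_restrict x.2.1]
    exact (riviera_maximal_iff x.2.1).1 x.2.2 (j:ℤ) (Int.natCast_nonneg _)
      (by exact_mod_cast j.2)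
  · refine (riviera_maximal_iff (extF_cfg n y.1)).2 ?_
    intro j hj0 hjn
    have hh := y.2 ⟨j.toNat, by omega⟩
    rwa [show (((⟨j.toNat, by omega⟩ : Fin n)):ℤ) = j by
      simp [Int.toNat_of_nonneg hj0]] at hh
  · intro x
    exact Subtype.ext (extF_restrict x.2.1)
  · intro y
    apply Subtype.ext
    funext k
    show extF n y.1 (k:ℤ) = y.1 k
    unfold extF
    rw [dif_pos ⟨Int.natCast_nonneg _, by exact_mod_cast k.2⟩]
    congr 1 <;> (apply Fin.ext <;> simp)

lemma tw0 : twoStoryCount 0 = 1 := by rw [count_small]; decide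
lemma tw1 : twoStoryCount 1 = 1 := by rw [count_small]; decide
lemma tw2 : twoStoryCount 2 = 1 := by rw [count_small]; decide
lemma tw3 : twoStoryCount 3 = 3 := by rw [count_small]; decide

end Small

lemma twAC : ∀ k : ℕ, twoStoryCount (4 + k) = AC k := count_AC

theorem twoStoryCount_recurrence :
    twoStoryCount 0 = 1 ∧ twoStoryCount 1 = 1 ∧ twoStoryCount 2 = 1 ∧
    twoStoryCount 3 = 3 ∧ twoStoryCount 4 = 6 ∧ twoStoryCount 5 = 7 ∧
    twoStoryCount 6 = 8 ∧ twoStoryCount 7 = 11 ∧ twoStoryCount 8 = 18 ∧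
    twoStoryCount 9 = 30 ∧
    ∀ n : ℕ, 10 ≤ n →
      twoStoryCount n + twoStoryCount (n - 8) + 2 * twoStoryCount (n - 9) +
          twoStoryCount (n - 10) =
        twoStoryCount (n - 3) + twoStoryCount (n - 4) + 2 * twoStoryCount (n - 5) +
          2 * twoStoryCount (n - 6) + twoStoryCount (n - 7) := by
  have h4 : twoStoryCount 4 = 6 := by rw [show (4:ℕ) = 4 + 0 from rfl, twAC, ACv0]
  have h5 : twoStoryCount 5 = 7 := by rw [show (5:ℕ) = 4 + 1 from rfl, twAC, ACv1]
  have h6 : twoStoryCount 6 = 8 := by rw [show (6:ℕ) = 4 + 2 from rfl, twAC, ACv2]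
  have h7 : twoStoryCount 7 = 11 := by rw [show (7:ℕ) = 4 + 3 from rfl, twAC, ACv3]
  have h8 : twoStoryCount 8 = 18 := by rw [show (8:ℕ) = 4 + 4 from rfl, twAC, ACv4]
  have h9 : twoStoryCount 9 = 30 := by rw [show (9:ℕ) = 4 + 5 from rfl, twAC, ACv5]
  have h10 : twoStoryCount 10 = 44 := by rw [show (10:ℕ) = 4 + 6 from rfl, twAC, ACv6]
  have h11 : twoStoryCount 11 = 59 := by rw [show (11:ℕ) = 4 + 7 from rfl, twAC, ACv7]
  have h12 : twoStoryCount 12 = 80 := by rw [show (12:ℕ) = 4 + 8 from rfl, twAC, ACv8]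
  have h13 : twoStoryCount 13 = 118 := by rw [show (13:ℕ) = 4 + 9 from rfl, twAC, ACv9]
  have h14 : twoStoryCount 14 = 182 := by rw [show (14:ℕ) = 4 + 10 from rfl, twAC, ACv10]
  have h15 : twoStoryCount 15 = 271 := by rw [show (15:ℕ) = 4 + 11 from rfl, twAC, ACv11]
  refine ⟨tw0, tw1, tw2, tw3, h4, h5, h6, h7, h8, h9, ?_⟩
  intro n hn
  by_cases hn16 : n < 16
  · interval_cases n <;>
      norm_num [tw0, tw1, tw2, tw3, h4, h5, h6, h7, h8, h9, h10, h11, h12, h13, h14, h15]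
  · obtain ⟨m, rfl⟩ : ∃ m, n = m + 16 := ⟨n - 16, by omega⟩
    rw [show m + 16 - 8 = 4 + (m + 4) by omega,
      show m + 16 - 9 = 4 + (m + 3) by omega, show m + 16 - 10 = 4 + (m + 2) by omega,
      show m + 16 - 3 = 4 + (m + 9) by omega, show m + 16 - 4 = 4 + (m + 8) by omega,
      show m + 16 - 5 = 4 + (m + 7) by omega, show m + 16 - 6 = 4 + (m + 6) by omega,
      show m + 16 - 7 = 4 + (m + 5) by omega, show m + 16 = 4 + (m + 12) by ring]
    rw [twAC, twAC, twAC, twAC, twAC, twAC, twAC, twAC, twAC]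
    exact AC_rec m
end

section
/- Let a_n denote the number of maximal configurations on the 2×n grid. Then a_0 = 1, a_1 = 1, a_2 = 1, a_3 = 4, a_4 = 6, a_5 = 10, and for every n ≥ 6 one has a_n + a_{n−6} = a_{n−1} + a_{n−2} + a_{n−4} (equivalently, a_n = a_{n−1} + a_{n−2} + a_{n−4} − a_{n−6}). -/
/-- An occupied cell `(r, j)` of the `2 × n` grid is blocked: the cells to its east,
west and south all exist within the grid and are all occupied.  (Row `0` is the
northern row, row `1` the southern row; columns are `0, …, n−1`.) -/
def GridBlocked (n : ℕ) (C : Fin 2 → ℕ → Bool) (r : Fin 2) (j : ℕ) : Prop :=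
  r = 0 ∧ 1 ≤ j ∧ j + 1 < n ∧
    C r (j + 1) = true ∧ C r (j - 1) = true ∧ C (r + 1) j = true

/-- A `2 × n` configuration is permissible if no occupied cell is blocked. -/
def GridPermissible (n : ℕ) (C : Fin 2 → ℕ → Bool) : Prop :=
  ∀ (r : Fin 2) (j : ℕ), j < n → C r j = true → ¬ GridBlocked n C r j

/-- Occupying the cell `(r, j)`. -/
def gridUpdate (C : Fin 2 → ℕ → Bool) (r : Fin 2) (j : ℕ) : Fin 2 → ℕ → Bool :=
  fun r' j' => if r' = r ∧ j' = j then true else C r' j'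

/-- A `2 × n` configuration is maximal if it is permissible and occupying any
empty cell yields an impermissible configuration. -/
def GridMaximal (n : ℕ) (C : Fin 2 → ℕ → Bool) : Prop :=
  GridPermissible n C ∧
    ∀ (r : Fin 2) (j : ℕ), j < n → C r j = false →
      ¬ GridPermissible n (gridUpdate C r j)

/-- `gridCount n` = the number of maximal configurations on the `2 × n` grid. -/
noncomputable def gridCount (n : ℕ) : ℕ :=
  Nat.card {C : Fin 2 → ℕ → Bool //
    (∀ (r : Fin 2) (j : ℕ), n ≤ j → C r j = false) ∧ GridMaximal n C}


namespace GridAux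

def padW (n : ℕ) (w : ℕ → Bool) : Prop := ∀ j, n ≤ j → w j = false

def GoodP (m : ℕ) (w : ℕ → Bool) : Prop := ∀ j, 2 ≤ j → j < m → w j = false →
  (w (j-1) = true ∧ j + 1 < m ∧ w (j+1) = true) ∨
  (w (j-2) = true ∧ w (j-1) = true) ∨
  (j + 2 < m ∧ w (j+1) = true ∧ w (j+2) = true)

def SOk (c1 c2 d1 d2 d3 : Bool) : Bool := d1 || (c1 && c2) || (c2 && d2) || (d2 && d3)

def Fc : ℕ → Bool → Bool → Bool → Bool → ℕ
  | 0, c1, c2, d1, d2 => ((d1 || (c1 && c2) || (c2 && d2)) && (d2 || (c2 && d1))).toNat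
  | k+1, c1, c2, d1, d2 =>
      (SOk c1 c2 d1 d2 true).toNat * Fc k c2 d1 d2 true +
      (SOk c1 c2 d1 d2 false).toNat * Fc k c2 d1 d2 false

lemma Fc_succ (k : ℕ) (c1 c2 d1 d2 : Bool) :
    Fc (k+1) c1 c2 d1 d2 =
      (SOk c1 c2 d1 d2 true).toNat * Fc k c2 d1 d2 true +
      (SOk c1 c2 d1 d2 false).toNat * Fc k c2 d1 d2 false := rfl

lemma Fc_rec : ∀ (k : ℕ) (c1 c2 d1 d2 : Bool),
    Fc (k+6) c1 c2 d1 d2 + Fc k c1 c2 d1 d2 =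
      Fc (k+5) c1 c2 d1 d2 + Fc (k+4) c1 c2 d1 d2 + Fc (k+2) c1 c2 d1 d2 := by
  intro k
  induction k with
  | zero => decide
  | succ k ih =>
    intro c1 c2 d1 d2
    have ht := ih c2 d1 d2 true
    have hf := ih c2 d1 d2 false
    show Fc (k+6+1) c1 c2 d1 d2 + Fc (k+1) c1 c2 d1 d2 =
      Fc (k+5+1) c1 c2 d1 d2 + Fc (k+4+1) c1 c2 d1 d2 + Fc (k+2+1) c1 c2 d1 d2
    rw [Fc_succ (k+6) c1 c2 d1 d2, Fc_succ k c1 c2 d1 d2, Fc_succ (k+5) c1 c2 d1 d2,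
      Fc_succ (k+4) c1 c2 d1 d2, Fc_succ (k+2) c1 c2 d1 d2]
    cases hst : SOk c1 c2 d1 d2 true <;> cases hsf : SOk c1 c2 d1 d2 false <;>
      simp only [Bool.toNat_true, Bool.toNat_false] <;> omega

-- finiteness helper
lemma finite_pad {P : (ℕ → Bool) → Prop} (m : ℕ) (h : ∀ w, P w → padW m w) :
    Finite {w : ℕ → Bool // P w} := by
  apply Finite.of_injective (fun w => (fun i : Fin m => w.1 i))
  intro a b hab
  apply Subtype.ext
  funext j
  by_cases hj : j < m
  · exact congrFun hab ⟨j, hj⟩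
  · rw [h a.1 a.2 j (by omega), h b.1 b.2 j (by omega)]

-- split a count by a boolean observable
lemma card_split {P : (ℕ → Bool) → Prop} (m : ℕ) (hP : ∀ w, P w → padW m w)
    (f : (ℕ → Bool) → Bool) :
    Nat.card {w : ℕ → Bool // P w} =
      Nat.card {w : ℕ → Bool // P w ∧ f w = true} +
        Nat.card {w : ℕ → Bool // P w ∧ f w = false} := by
  have h1 : Finite {w : ℕ → Bool // P w ∧ f w = true} :=
    finite_pad m (fun w hw => hP w hw.1)
  have h2 : Finite {w : ℕ → Bool // P w ∧ f w = false} :=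
    finite_pad m (fun w hw => hP w hw.1)
  have e : {w : ℕ → Bool // P w} ≃
      {w : ℕ → Bool // P w ∧ f w = true} ⊕ {w : ℕ → Bool // P w ∧ f w = false} :=
    { toFun := fun x =>
        if h : f x.1 = true then Sum.inl ⟨x.1, x.2, h⟩
        else Sum.inr ⟨x.1, x.2, by simpa using h⟩
      invFun := Sum.elim (fun y => ⟨y.1, y.2.1⟩) (fun y => ⟨y.1, y.2.1⟩)
      left_inv := fun x => by by_cases h : f x.1 = true <;> simp [h]
      right_inv := fun s => by
        rcases s with y | y
        · simp [y.2.2]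
        · have : ¬ (f y.1 = true) := by simp [y.2.2]
          simp [this] }
  rw [Nat.card_congr e, Nat.card_sum]

end GridAux

namespace GridAux2
open GridAux

lemma goodP4_iff (c1 c2 d1 d2 : Bool) :
    GoodP 4 (fun j => if j = 0 then c1 else if j = 1 then c2 else
      if j = 2 then d1 else if j = 3 then d2 else false) ↔
      ((d1 || (c1 && c2) || (c2 && d2)) && (d2 || (c2 && d1))) = true := by
  constructor
  · intro h
    have h2 := h 2 (by omega) (by omega)
    have h3 := h 3 (by omega) (by omega)
    simp only [] at h2 h3
    norm_num at h2 h3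
    cases d1 <;> cases d2 <;> cases c1 <;> cases c2 <;> simp_all
  · intro hb j h2 h4 hf
    interval_cases j <;> norm_num at hf ⊢ <;>
      cases d1 <;> cases d2 <;> cases c1 <;> cases c2 <;> simp_all

lemma goodP_tail {m : ℕ} {w : ℕ → Bool} (h : GoodP (m+1) w) :
    GoodP m (fun j => w (j+1)) := by
  intro j hj2 hjm hf
  have hJ := h (j+1) (by omega) (by omega) (by simpa using hf)
  rw [show j+1-1 = j by omega, show j+1-2 = j-1 by omega,
    show j+1+1 = j+2 by omega, show j+1+2 = j+3 by omega] at hJ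
  rcases hJ with ⟨ha, hb, hc⟩ | ⟨ha, hb⟩ | ⟨ha, hb, hc⟩
  · left
    refine ⟨?_, by omega, ?_⟩
    · show w (j-1+1) = true
      rw [show j-1+1 = j by omega]; exact ha
    · show w (j+1+1) = true
      rw [show j+1+1 = j+2 by omega]; exact hc
  · right; left
    constructor
    · show w (j-2+1) = true
      rw [show j-2+1 = j-1 by omega]; exact ha
    · show w (j-1+1) = true
      rw [show j-1+1 = j by omega]; exact hb
  · right; right
    refine ⟨by omega, ?_, ?_⟩
    · show w (j+1+1) = true
      rw [show j+1+1 = j+2 by omega]; exact hb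
    · show w (j+2+1) = true
      rw [show j+2+1 = j+3 by omega]; exact hc

theorem card_S : ∀ (k : ℕ) (c1 c2 d1 d2 : Bool),
    Nat.card {w : ℕ → Bool // padW (k+4) w ∧ w 0 = c1 ∧ w 1 = c2 ∧ w 2 = d1 ∧ w 3 = d2 ∧
      GoodP (k+4) w} = Fc k c1 c2 d1 d2 := by
  intro k
  induction k with
  | zero =>
    intro c1 c2 d1 d2
    set w0 : ℕ → Bool := fun j => if j = 0 then c1 else if j = 1 then c2 else
      if j = 2 then d1 else if j = 3 then d2 else false with hw0
    have hv0 : w0 0 = c1 := by simp [hw0]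
    have hv1 : w0 1 = c2 := by simp [hw0]
    have hv2 : w0 2 = d1 := by simp [hw0]
    have hv3 : w0 3 = d2 := by simp [hw0]
    have key : ∀ w : ℕ → Bool, padW 4 w → w 0 = c1 → w 1 = c2 → w 2 = d1 → w 3 = d2 →
        w = w0 := by
      intro w hp h0 h1 h2 h3
      funext j
      rcases j with _|_|_|_|j
      · rw [h0, hv0]
      · rw [h1, hv1]
      · rw [h2, hv2]
      · rw [h3, hv3]
      · rw [hp (j+4) (by omega)]
        simp [hw0]
    by_cases hF : ((d1 || (c1 && c2) || (c2 && d2)) && (d2 || (c2 && d1))) = true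
    · have hgood : GoodP 4 w0 := (goodP4_iff c1 c2 d1 d2).2 hF
      have : Unique {w : ℕ → Bool // padW (0+4) w ∧ w 0 = c1 ∧ w 1 = c2 ∧ w 2 = d1 ∧
          w 3 = d2 ∧ GoodP (0+4) w} := by
        refine ⟨⟨⟨w0, ?_, hv0, hv1, hv2, hv3, hgood⟩⟩, ?_⟩
        · intro j hj
          simp only [hw0]
          split <;> try omega
          split <;> try omega
          split <;> try omega
          split <;> try omega
          rfl
        · rintro ⟨w, hp, h0, h1, h2, h3, _⟩
          exact Subtype.ext (key w hp h0 h1 h2 h3)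
      rw [Nat.card_unique]
      simp [Fc, hF]
    · have : IsEmpty {w : ℕ → Bool // padW (0+4) w ∧ w 0 = c1 ∧ w 1 = c2 ∧ w 2 = d1 ∧
          w 3 = d2 ∧ GoodP (0+4) w} := by
        refine ⟨?_⟩
        rintro ⟨w, hp, h0, h1, h2, h3, hg⟩
        have hw : w = w0 := key w hp h0 h1 h2 h3
        rw [hw] at hg
        exact hF ((goodP4_iff c1 c2 d1 d2).1 hg)
      rw [Nat.card_of_isEmpty]
      have hF' : ((d1 || (c1 && c2) || (c2 && d2)) && (d2 || (c2 && d1))) = false := by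
        simpa using hF
      simp [Fc, hF']
  | succ k ih =>
    intro c1 c2 d1 d2
    show Nat.card {w : ℕ → Bool // padW (k+5) w ∧ w 0 = c1 ∧ w 1 = c2 ∧ w 2 = d1 ∧
      w 3 = d2 ∧ GoodP (k+5) w} = Fc (k+1) c1 c2 d1 d2
    rw [card_split (k+5) (fun w hw => hw.1) (fun w => w 4)]
    have main : ∀ b : Bool,
        Nat.card {w : ℕ → Bool // (padW (k+5) w ∧ w 0 = c1 ∧ w 1 = c2 ∧ w 2 = d1 ∧
          w 3 = d2 ∧ GoodP (k+5) w) ∧ w 4 = b} = (SOk c1 c2 d1 d2 b).toNat * Fc k c2 d1 d2 b := by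
      intro b
      by_cases hok : SOk c1 c2 d1 d2 b = true
      · have e : {w : ℕ → Bool // (padW (k+5) w ∧ w 0 = c1 ∧ w 1 = c2 ∧ w 2 = d1 ∧
            w 3 = d2 ∧ GoodP (k+5) w) ∧ w 4 = b} ≃
            {v : ℕ → Bool // padW (k+4) v ∧ v 0 = c2 ∧ v 1 = d1 ∧ v 2 = d2 ∧ v 3 = b ∧
              GoodP (k+4) v} := by
          refine ⟨fun x => ⟨fun j => x.1 (j+1), ?_, ?_, ?_, ?_, ?_, ?_⟩,
            fun v => ⟨fun j => if j = 0 then c1 else v.1 (j-1),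
              ⟨⟨?_, ?_, ?_, ?_, ?_, ?_⟩, ?_⟩⟩, ?_, ?_⟩
          · intro j hj
            exact x.2.1.1 (j+1) (by omega)
          · exact x.2.1.2.2.1
          · exact x.2.1.2.2.2.1
          · exact x.2.1.2.2.2.2.1
          · exact x.2.2
          · exact goodP_tail x.2.1.2.2.2.2.2
          · -- pad for cons
            intro j hj
            show (if j = 0 then c1 else v.1 (j-1)) = false
            rw [if_neg (by omega : ¬ j = 0)]
            exact v.2.1 (j-1) (by omega)
          · show (if (0:ℕ) = 0 then c1 else v.1 (0-1)) = c1
            simp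
          · show (if (1:ℕ) = 0 then c1 else v.1 (1-1)) = c2
            simpa using v.2.2.1
          · show (if (2:ℕ) = 0 then c1 else v.1 (2-1)) = d1
            simpa using v.2.2.2.1
          · show (if (3:ℕ) = 0 then c1 else v.1 (3-1)) = d2
            simpa using v.2.2.2.2.1
          · -- GoodP (k+5) of the cons
            intro j hj2 hjm hf
            have hf' : v.1 (j-1) = false := by
              have : (if j = 0 then c1 else v.1 (j-1)) = false := hf
              rwa [if_neg (by omega : ¬ j = 0)] at this
            by_cases hj3 : 3 ≤ j
            · have hJ := v.2.2.2.2.2.2 (j-1) (by omega) (by omega) hf'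
              rw [show j-1-1 = j-2 by omega, show j-1-2 = j-3 by omega,
                show j-1+1 = j by omega, show j-1+2 = j+1 by omega] at hJ
              rcases hJ with ⟨ha, hb, hc⟩ | ⟨ha, hb⟩ | ⟨ha, hb, hc⟩
              · left
                refine ⟨?_, by omega, ?_⟩
                · show (if j-1 = 0 then c1 else v.1 (j-1-1)) = true
                  rw [if_neg (by omega : ¬ j-1 = 0), show j-1-1 = j-2 by omega]
                  exact ha
                · show (if j+1 = 0 then c1 else v.1 (j+1-1)) = true
                  rw [if_neg (by omega : ¬ j+1 = 0), show j+1-1 = j by omega]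
                  exact hc
              · right; left
                constructor
                · show (if j-2 = 0 then c1 else v.1 (j-2-1)) = true
                  rw [if_neg (by omega : ¬ j-2 = 0), show j-2-1 = j-3 by omega]
                  exact ha
                · show (if j-1 = 0 then c1 else v.1 (j-1-1)) = true
                  rw [if_neg (by omega : ¬ j-1 = 0), show j-1-1 = j-2 by omega]
                  exact hb
              · right; right
                refine ⟨by omega, ?_, ?_⟩
                · show (if j+1 = 0 then c1 else v.1 (j+1-1)) = true
                  rw [if_neg (by omega : ¬ j+1 = 0), show j+1-1 = j by omega]
                  exact hb
                · show (if j+2 = 0 then c1 else v.1 (j+2-1)) = true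
                  rw [if_neg (by omega : ¬ j+2 = 0), show j+2-1 = j+1 by omega]
                  exact hc
            · -- j = 2
              have hj2' : j = 2 := by omega
              subst hj2'
              have hd1f : d1 = false := by
                rw [← v.2.2.2.1]; simpa using hf'
              have hok' := hok
              simp only [SOk, Bool.or_eq_true, Bool.and_eq_true] at hok'
              rcases hok' with ((hd1 | ⟨ha, hb⟩) | ⟨ha, hb⟩) | ⟨ha, hb⟩
              · rw [hd1f] at hd1; exact absurd hd1 (by simp)
              · right; left
                constructor
                · show (if (0:ℕ) = 0 then c1 else v.1 (0-1)) = true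
                  simpa using ha
                · show (if (1:ℕ) = 0 then c1 else v.1 (1-1)) = true
                  simp only [if_neg (by omega : ¬ (1:ℕ) = 0)]
                  rw [show (1:ℕ)-1 = 0 by omega, v.2.2.1]; exact hb
              · left
                refine ⟨?_, by omega, ?_⟩
                · show (if (1:ℕ) = 0 then c1 else v.1 (1-1)) = true
                  simp only [if_neg (by omega : ¬ (1:ℕ) = 0)]
                  rw [show (1:ℕ)-1 = 0 by omega, v.2.2.1]; exact ha
                · show (if (3:ℕ) = 0 then c1 else v.1 (3-1)) = true
                  simp only [if_neg (by omega : ¬ (3:ℕ) = 0)]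
                  rw [show (3:ℕ)-1 = 2 by omega, v.2.2.2.2.1]; exact hb
              · right; right
                refine ⟨by omega, ?_, ?_⟩
                · show (if (3:ℕ) = 0 then c1 else v.1 (3-1)) = true
                  simp only [if_neg (by omega : ¬ (3:ℕ) = 0)]
                  rw [show (3:ℕ)-1 = 2 by omega, v.2.2.2.2.1]; exact ha
                · show (if (4:ℕ) = 0 then c1 else v.1 (4-1)) = true
                  simp only [if_neg (by omega : ¬ (4:ℕ) = 0)]
                  rw [show (4:ℕ)-1 = 3 by omega, v.2.2.2.2.2.1]; exact hb
          · -- w 4 = b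
            show (if (4:ℕ) = 0 then c1 else v.1 (4-1)) = b
            simp only [if_neg (by omega : ¬ (4:ℕ) = 0)]
            rw [show (4:ℕ)-1 = 3 by omega]
            exact v.2.2.2.2.2.1
          · -- left inverse
            intro x
            apply Subtype.ext
            funext j
            rcases j with _ | j
            · simp [x.2.1.2.1]
            · simp
          · -- right inverse
            intro v
            apply Subtype.ext
            funext j
            simp
        rw [Nat.card_congr e, ih c2 d1 d2 b, hok]
        simp
      · have hok' : SOk c1 c2 d1 d2 b = false := by simpa using hok
        have : IsEmpty {w : ℕ → Bool // (padW (k+5) w ∧ w 0 = c1 ∧ w 1 = c2 ∧ w 2 = d1 ∧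
            w 3 = d2 ∧ GoodP (k+5) w) ∧ w 4 = b} := by
          refine ⟨?_⟩
          rintro ⟨w, ⟨hp, h0, h1, h2, h3, hg⟩, h4⟩
          simp only [SOk] at hok'
          have hd1 : d1 = false := by
            cases d1
            · rfl
            · simp at hok'
          have hcl := hg 2 (by omega) (by omega) (by rw [h2, hd1])
          rw [show (2:ℕ)-1 = 1 by norm_num, show (2:ℕ)-2 = 0 by norm_num,
            show (2:ℕ)+1 = 3 by norm_num, show (2:ℕ)+2 = 4 by norm_num] at hcl
          rw [Bool.or_eq_false_iff, Bool.or_eq_false_iff, Bool.or_eq_false_iff] at hok'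
          obtain ⟨⟨⟨_, hA⟩, hB⟩, hC⟩ := hok'
          rcases hcl with ⟨ha, _, hb⟩ | ⟨ha, hb⟩ | ⟨_, ha, hb⟩
          · rw [h1] at ha; rw [h3] at hb
            rw [ha, hb] at hB
            exact absurd hB (by simp)
          · rw [h0] at ha; rw [h1] at hb
            rw [ha, hb] at hA
            exact absurd hA (by simp)
          · rw [h3] at ha; rw [h4] at hb
            rw [ha, hb] at hC
            exact absurd hC (by simp)
        rw [Nat.card_of_isEmpty, hok']
        simp
    rw [main true, main false]
    exact (Fc_succ k c1 c2 d1 d2).symm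

end GridAux2

namespace GridAux3
open GridAux GridAux2

def GoodW (n : ℕ) (w : ℕ → Bool) : Prop := ∀ j, j < n → w j = false →
  (1 ≤ j ∧ j + 1 < n ∧ w (j-1) = true ∧ w (j+1) = true) ∨
  (2 ≤ j ∧ w (j-2) = true ∧ w (j-1) = true) ∨
  (j + 2 < n ∧ w (j+1) = true ∧ w (j+2) = true)

noncomputable def gridA (n : ℕ) : ℕ := Nat.card {w : ℕ → Bool // padW n w ∧ GoodW n w}

lemma goodW_iff_goodP (n : ℕ) (w : ℕ → Bool) :
    GoodW n w ↔ GoodP (n+2) (fun j => if j < 2 then false else w (j-2)) := by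
  constructor
  · intro h j hj2 hjn hf
    have hf' : w (j-2) = false := by
      have : (if j < 2 then false else w (j-2)) = false := hf
      rwa [if_neg (by omega : ¬ j < 2)] at this
    have hJ := h (j-2) (by omega) hf'
    rcases hJ with ⟨h1, h2, h3, h4⟩ | ⟨h1, h2, h3⟩ | ⟨h1, h2, h3⟩
    · left
      refine ⟨?_, by omega, ?_⟩
      · show (if j-1 < 2 then false else w (j-1-2)) = true
        rw [if_neg (by omega : ¬ j-1 < 2), show j-1-2 = j-3 by omega]
        rw [show j-2-1 = j-3 by omega] at h3
        exact h3
      · show (if j+1 < 2 then false else w (j+1-2)) = true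
        rw [if_neg (by omega : ¬ j+1 < 2), show j+1-2 = j-1 by omega]
        rw [show j-2+1 = j-1 by omega] at h4
        exact h4
    · right; left
      constructor
      · show (if j-2 < 2 then false else w (j-2-2)) = true
        rw [if_neg (by omega : ¬ j-2 < 2), show j-2-2 = j-4 by omega]
        rw [show j-2-2 = j-4 by omega] at h2
        exact h2
      · show (if j-1 < 2 then false else w (j-1-2)) = true
        rw [if_neg (by omega : ¬ j-1 < 2), show j-1-2 = j-3 by omega]
        rw [show j-2-1 = j-3 by omega] at h3
        exact h3
    · right; right
      refine ⟨by omega, ?_, ?_⟩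
      · show (if j+1 < 2 then false else w (j+1-2)) = true
        rw [if_neg (by omega : ¬ j+1 < 2), show j+1-2 = j-1 by omega]
        rw [show j-2+1 = j-1 by omega] at h2
        exact h2
      · show (if j+2 < 2 then false else w (j+2-2)) = true
        rw [if_neg (by omega : ¬ j+2 < 2), show j+2-2 = j by omega]
        rw [show j-2+2 = j by omega] at h3
        exact h3
  · intro h j hj hf
    have hJ := h (j+2) (by omega) (by omega)
      (by show (if j+2 < 2 then false else w (j+2-2)) = false
          rw [if_neg (by omega : ¬ j+2 < 2), show j+2-2 = j by omega]; exact hf)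
    rw [show j+2-1 = j+1 by omega, show j+2-2 = j by omega,
      show j+2+1 = j+3 by omega, show j+2+2 = j+4 by omega] at hJ
    beta_reduce at hJ
    rcases hJ with ⟨h1, h2, h3⟩ | ⟨h1, h2⟩ | ⟨h1, h2, h3⟩
    · -- h1 : (if j+1 < 2 then false else w (j+1-2)) = true
      by_cases hj0 : j = 0
      · subst hj0
        rw [if_pos (by omega)] at h1
        exact absurd h1 (by simp)
      · left
        refine ⟨by omega, by omega, ?_, ?_⟩
        · rw [if_neg (by omega : ¬ j+1 < 2), show j+1-2 = j-1 by omega] at h1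
          exact h1
        · rw [if_neg (by omega : ¬ j+3 < 2), show j+3-2 = j+1 by omega] at h3
          exact h3
    · by_cases hj1 : j < 2
      · rw [if_pos hj1] at h1
        exact absurd h1 (by simp)
      · right; left
        refine ⟨by omega, ?_, ?_⟩
        · rw [if_neg hj1] at h1
          exact h1
        · rw [if_neg (by omega : ¬ j+1 < 2), show j+1-2 = j-1 by omega] at h2
          exact h2
    · right; right
      refine ⟨by omega, ?_, ?_⟩
      · rw [if_neg (by omega : ¬ j+3 < 2), show j+3-2 = j+1 by omega] at h2
        exact h2
      · rw [if_neg (by omega : ¬ j+4 < 2), show j+4-2 = j+2 by omega] at h3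
        exact h3

lemma gridA_two (n : ℕ) : gridA (n+2) =
    Fc n false false true true + Fc n false false true false +
      (Fc n false false false true + Fc n false false false false) := by
  have e : ∀ d1 d2 : Bool,
      {w : ℕ → Bool // ((padW (n+2) w ∧ GoodW (n+2) w) ∧ w 0 = d1) ∧ w 1 = d2} ≃
      {v : ℕ → Bool // padW (n+4) v ∧ v 0 = false ∧ v 1 = false ∧ v 2 = d1 ∧ v 3 = d2 ∧
        GoodP (n+4) v} := by
    intro d1 d2
    refine ⟨fun x => ⟨fun j => if j < 2 then false else x.1 (j-2), ?_, ?_, ?_, ?_, ?_, ?_⟩,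
      fun v => ⟨fun j => v.1 (j+2), ⟨⟨?_, ?_⟩, ?_⟩, ?_⟩, ?_, ?_⟩
    · intro j hj
      show (if j < 2 then false else x.1 (j-2)) = false
      rw [if_neg (by omega : ¬ j < 2)]
      exact x.2.1.1.1 (j-2) (by omega)
    · simp
    · simp
    · show (if (2:ℕ) < 2 then false else x.1 (2-2)) = d1
      rw [if_neg (by omega : ¬ (2:ℕ) < 2), show (2:ℕ)-2 = 0 by omega]
      exact x.2.1.2
    · show (if (3:ℕ) < 2 then false else x.1 (3-2)) = d2
      rw [if_neg (by omega : ¬ (3:ℕ) < 2), show (3:ℕ)-2 = 1 by omega]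
      exact x.2.2
    · exact (goodW_iff_goodP (n+2) x.1).1 x.2.1.1.2
    · intro j hj
      exact v.2.1 (j+2) (by omega)
    · -- GoodW of shift
      have hfe : (fun j => if j < 2 then false else v.1 (j-2+2)) = v.1 := by
        funext j
        rcases j with _ | _ | j
        · rw [if_pos (by omega : (0:ℕ) < 2)]
          exact v.2.2.1.symm
        · rw [if_pos (by omega : (1:ℕ) < 2)]
          exact v.2.2.2.1.symm
        · rw [if_neg (by omega : ¬ j+2 < 2), show j+2-2 = j by omega]
      apply (goodW_iff_goodP (n+2) (fun j => v.1 (j+2))).2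
      show GoodP (n+2+2) (fun j => if j < 2 then false else v.1 (j-2+2))
      rw [hfe]
      exact v.2.2.2.2.2.2
    · exact v.2.2.2.2.1
    · exact v.2.2.2.2.2.1
    · intro x
      apply Subtype.ext
      funext j
      show (if j+2 < 2 then false else x.1 (j+2-2)) = x.1 j
      rw [if_neg (by omega : ¬ j+2 < 2), show j+2-2 = j by omega]
    · intro v
      apply Subtype.ext
      funext j
      show (if j < 2 then false else v.1 (j-2+2)) = v.1 j
      rcases j with _ | _ | j
      · rw [if_pos (by omega : (0:ℕ) < 2)]
        exact v.2.2.1.symm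
      · rw [if_pos (by omega : (1:ℕ) < 2)]
        exact v.2.2.2.1.symm
      · rw [if_neg (by omega : ¬ j+2 < 2), show j+2-2 = j by omega]
  have hval : ∀ d1 d2 : Bool,
      Nat.card {w : ℕ → Bool // ((padW (n+2) w ∧ GoodW (n+2) w) ∧ w 0 = d1) ∧ w 1 = d2} =
        Fc n false false d1 d2 := by
    intro d1 d2
    rw [Nat.card_congr (e d1 d2)]
    exact card_S n false false d1 d2
  show Nat.card {w : ℕ → Bool // padW (n+2) w ∧ GoodW (n+2) w} = _
  rw [card_split (P := fun w => padW (n+2) w ∧ GoodW (n+2) w) (n+2)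
      (fun w hw => hw.1) (fun w => w 0),
    card_split (P := fun w => (padW (n+2) w ∧ GoodW (n+2) w) ∧ w 0 = true) (n+2)
      (fun w hw => hw.1.1) (fun w => w 1),
    card_split (P := fun w => (padW (n+2) w ∧ GoodW (n+2) w) ∧ w 0 = false) (n+2)
      (fun w hw => hw.1.1) (fun w => w 1),
    hval true true, hval true false, hval false true, hval false false]

end GridAux3

namespace GridAux4
open GridAux GridAux3

def southV (n : ℕ) (w : ℕ → Bool) (j : ℕ) : Bool :=
  decide (j < n) && !(decide (1 ≤ j) && decide (j + 1 < n) && w (j-1) && w j && w (j+1))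

def liftC (n : ℕ) (w : ℕ → Bool) : Fin 2 → ℕ → Bool :=
  fun r j => if r = 0 then w j else southV n w j

lemma gu_other {C : Fin 2 → ℕ → Bool} {r r' : Fin 2} (h : r' ≠ r) (j x : ℕ) :
    gridUpdate C r j r' x = C r' x := by
  unfold gridUpdate
  rw [if_neg]
  rintro ⟨h1, -⟩
  exact h h1

lemma gu_same (C : Fin 2 → ℕ → Bool) (r : Fin 2) (j : ℕ) : gridUpdate C r j r j = true := by
  unfold gridUpdate
  rw [if_pos ⟨rfl, rfl⟩]

lemma gu_col {C : Fin 2 → ℕ → Bool} {x j : ℕ} (h : ¬ x = j) (r r' : Fin 2) :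
    gridUpdate C r j r' x = C r' x := by
  unfold gridUpdate
  rw [if_neg]
  rintro ⟨-, h2⟩
  exact h h2

lemma south_eq {n : ℕ} {C : Fin 2 → ℕ → Bool} (hpad : ∀ (r : Fin 2) j, n ≤ j → C r j = false)
    (hM : GridMaximal n C) : ∀ j, C 1 j = southV n (C 0) j := by
  intro j
  by_cases hj : j < n
  · by_cases ht : 1 ≤ j ∧ j + 1 < n ∧ C 0 (j-1) = true ∧ C 0 j = true ∧ C 0 (j+1) = true
    · obtain ⟨t1, t2, t3, t4, t5⟩ := ht
      have hS : southV n (C 0) j = false := by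
        simp [southV, hj, t1, t2, t3, t4, t5]
      rw [hS]
      cases hc : C 1 j
      · rfl
      · exfalso
        exact hM.1 0 j hj t4 ⟨rfl, t1, t2, t5, t3,
          by rw [show ((0:Fin 2)+1) = 1 by decide]; exact hc⟩
    · have hS : southV n (C 0) j = true := by
        have hX : (decide (1 ≤ j) && decide (j + 1 < n) && C 0 (j-1) && C 0 j
            && C 0 (j+1)) = false := by
          cases hXc : (decide (1 ≤ j) && decide (j + 1 < n) && C 0 (j-1) && C 0 j
            && C 0 (j+1))
          · rfl
          · exfalso
            simp only [Bool.and_eq_true, decide_eq_true_eq] at hXc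
            exact ht ⟨hXc.1.1.1.1, hXc.1.1.1.2, hXc.1.1.2, hXc.1.2, hXc.2⟩
        simp [southV, hj, hX]
      rw [hS]
      cases hc : C 1 j
      · exfalso
        have hnp := hM.2 1 j hj hc
        apply hnp
        intro r' j' hj' hocc hblk
        obtain ⟨hr0, b1, b2, be, bw, bs⟩ := hblk
        subst hr0
        have h0 : ∀ x, gridUpdate C 1 j 0 x = C 0 x := fun x => gu_other (by decide) j x
        rw [h0] at be bw hocc
        rw [show ((0:Fin 2)+1) = 1 by decide] at bs
        by_cases hjj : j' = j
        · subst hjj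
          exact ht ⟨b1, b2, bw, hocc, be⟩
        · rw [gu_col hjj] at bs
          exact hM.1 0 j' hj' hocc ⟨rfl, b1, b2, be, bw,
            by rw [show ((0:Fin 2)+1) = 1 by decide]; exact bs⟩
      · rfl
  · rw [hpad 1 j (by omega)]
    have : southV n (C 0) j = false := by simp [southV, hj]
    rw [this]

lemma maximal_goodW {n : ℕ} {C : Fin 2 → ℕ → Bool} (hM : GridMaximal n C) :
    GoodW n (C 0) := by
  intro j hj hf
  have hnp := hM.2 0 j hj hf
  unfold GridPermissible at hnp
  push_neg at hnp
  obtain ⟨r', j', hj', hocc, hblk⟩ := hnp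
  obtain ⟨hr0, b1, b2, be, bw, bs⟩ := hblk
  subst hr0
  have h1 : ∀ x, gridUpdate C 0 j 1 x = C 1 x := fun x => gu_other (by decide) j x
  rw [show ((0:Fin 2)+1) = 1 by decide, h1] at bs
  by_cases e1 : j' = j
  · subst e1
    left
    refine ⟨b1, b2, ?_, ?_⟩
    · rw [gu_col (by omega : ¬ j' - 1 = j')] at bw
      exact bw
    · rw [gu_col (by omega : ¬ j' + 1 = j')] at be
      exact be
  · by_cases e2 : j' + 1 = j
    · right; left
      refine ⟨by omega, ?_, ?_⟩
      · rw [gu_col (by omega : ¬ j' - 1 = j)] at bw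
        rw [show j - 2 = j' - 1 by omega]
        exact bw
      · rw [gu_col e1] at hocc
        rw [show j - 1 = j' by omega]
        exact hocc
    · by_cases e3 : j' = j + 1
      · right; right
        subst e3
        refine ⟨by omega, ?_, ?_⟩
        · rw [gu_col (by omega : ¬ j + 1 = j)] at hocc
          exact hocc
        · rw [gu_col (by omega : ¬ j + 1 + 1 = j)] at be
          rw [show j + 2 = j + 1 + 1 by omega]
          exact be
      · exfalso
        rw [gu_col e1] at hocc
        rw [gu_col (by omega : ¬ j' - 1 = j)] at bw
        rw [gu_col (by omega : ¬ j' + 1 = j)] at be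
        exact hM.1 0 j' hj' hocc ⟨rfl, b1, b2, be, bw, bs⟩

lemma lift_pad {n : ℕ} {w : ℕ → Bool} (hpad : padW n w) :
    ∀ (r : Fin 2) (j : ℕ), n ≤ j → liftC n w r j = false := by
  intro r j hj
  unfold liftC
  split
  · exact hpad j hj
  · simp [southV, show ¬ j < n by omega]

lemma lift_perm {n : ℕ} {w : ℕ → Bool} : GridPermissible n (liftC n w) := by
  intro r j hj hocc hblk
  obtain ⟨hr0, b1, b2, be, bw, bs⟩ := hblk
  subst hr0
  have l0 : ∀ x, liftC n w 0 x = w x := fun x => if_pos rfl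
  have l1 : ∀ x, liftC n w 1 x = southV n w x := fun x => if_neg (by decide)
  rw [l0] at hocc be bw
  rw [show ((0:Fin 2)+1) = 1 by decide, l1] at bs
  simp [southV, b1, b2, be, bw, hocc, hj] at bs

lemma lift_max {n : ℕ} {w : ℕ → Bool} (hpad : padW n w) (hG : GoodW n w) :
    GridMaximal n (liftC n w) := by
  constructor
  · exact lift_perm
  · intro r j hj hempty
    intro hP
    have l0 : ∀ x, liftC n w 0 x = w x := fun x => if_pos rfl
    have l1 : ∀ x, liftC n w 1 x = southV n w x := fun x => if_neg (by decide)
    fin_cases r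
    · -- r = 0
      replace hempty : liftC n w 0 j = false := hempty
      replace hP : GridPermissible n (gridUpdate (liftC n w) 0 j) := hP
      rw [l0] at hempty
      have hsv : southV n w j = true := by
        simp [southV, hj, hempty]
      rcases hG j hj hempty with ⟨g1, g2, g3, g4⟩ | ⟨g1, g2, g3⟩ | ⟨g1, g2, g3⟩
      · refine hP 0 j hj (gu_same _ 0 j) ⟨rfl, g1, g2, ?_, ?_, ?_⟩
        · rw [gu_col (by omega : ¬ j + 1 = j), l0]
          exact g4
        · rw [gu_col (by omega : ¬ j - 1 = j), l0]
          exact g3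
        · rw [show ((0:Fin 2)+1) = 1 by decide, gu_other (by decide) j, l1]
          exact hsv
      · refine hP 0 (j-1) (by omega) ?_ ⟨rfl, by omega, by omega, ?_, ?_, ?_⟩
        · rw [gu_col (by omega : ¬ j - 1 = j), l0]
          exact g3
        · rw [show j - 1 + 1 = j by omega]
          exact gu_same _ 0 j
        · rw [gu_col (by omega : ¬ j - 1 - 1 = j), l0, show j - 1 - 1 = j - 2 by omega]
          exact g2
        · rw [show ((0:Fin 2)+1) = 1 by decide, gu_other (by decide) j, l1]
          have hxx : j - 1 + 1 = j := by omega
          simp [southV, hxx, hempty, show j - 1 < n by omega]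
      · refine hP 0 (j+1) (by omega) ?_ ⟨rfl, by omega, by omega, ?_, ?_, ?_⟩
        · rw [gu_col (by omega : ¬ j + 1 = j), l0]
          exact g2
        · rw [gu_col (by omega : ¬ j + 1 + 1 = j), l0, show j + 1 + 1 = j + 2 by omega]
          exact g3
        · rw [show j + 1 - 1 = j by omega]
          exact gu_same _ 0 j
        · rw [show ((0:Fin 2)+1) = 1 by decide, gu_other (by decide) j, l1]
          have hxx : j + 1 - 1 = j := by omega
          simp [southV, hxx, hempty, show j + 1 < n by omega]
    · -- r = 1
      replace hempty : liftC n w 1 j = false := hempty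
      replace hP : GridPermissible n (gridUpdate (liftC n w) 1 j) := hP
      rw [l1] at hempty
      have hX : (decide (1 ≤ j) && decide (j + 1 < n) && w (j-1) && w j && w (j+1)) = true := by
        cases hXc : (decide (1 ≤ j) && decide (j + 1 < n) && w (j-1) && w j && w (j+1))
        · exfalso
          rw [southV, hXc] at hempty
          simp [hj] at hempty
        · rfl
      simp only [Bool.and_eq_true, decide_eq_true_eq] at hX
      obtain ⟨⟨⟨⟨m1, m2⟩, m3⟩, m4⟩, m5⟩ := hX
      refine hP 0 j hj ?_ ⟨rfl, m1, m2, ?_, ?_, ?_⟩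
      · rw [gu_other (by decide) j, l0]
        exact m4
      · rw [gu_other (by decide) j, l0]
        exact m5
      · rw [gu_other (by decide) j, l0]
        exact m3
      · rw [show ((0:Fin 2)+1) = 1 by decide]
        exact gu_same _ 1 j

lemma gridCount_eq_gridA (n : ℕ) : gridCount n = gridA n := by
  apply Nat.card_congr
  refine ⟨fun C => ⟨C.1 0, fun j hj => C.2.1 0 j hj, maximal_goodW C.2.2⟩,
    fun w => ⟨liftC n w.1, lift_pad w.2.1, lift_max w.2.1 w.2.2⟩, ?_, ?_⟩
  · intro C
    apply Subtype.ext
    funext r j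
    show liftC n (C.1 0) r j = C.1 r j
    fin_cases r
    · exact if_pos rfl
    · show (if (1 : Fin 2) = 0 then C.1 0 j else southV n (C.1 0) j) = C.1 1 j
      rw [if_neg (by decide)]
      exact (south_eq C.2.1 C.2.2 j).symm
  · intro w
    apply Subtype.ext
    show liftC n w.1 0 = w.1
    funext j
    exact if_pos rfl

lemma gridA_zero : gridA 0 = 1 := by
  have : Unique {w : ℕ → Bool // padW 0 w ∧ GoodW 0 w} := by
    refine ⟨⟨⟨fun _ => false, fun j _ => rfl, fun j hj => absurd hj (by omega)⟩⟩, ?_⟩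
    rintro ⟨w, hp, -⟩
    apply Subtype.ext
    funext j
    exact hp j (by omega)
  exact Nat.card_unique

lemma gridA_one : gridA 1 = 1 := by
  have : Unique {w : ℕ → Bool // padW 1 w ∧ GoodW 1 w} := by
    refine ⟨⟨⟨fun j => decide (j = 0), ?_, ?_⟩⟩, ?_⟩
    · intro j hj
      simp [show ¬ j = 0 by omega]
    · intro j hj hf
      rw [show j = 0 by omega] at hf
      simp at hf
    · rintro ⟨w, hp, hg⟩
      apply Subtype.ext
      show w = fun j => decide (j = 0)
      funext j
      rcases j with _ | j
      · show w 0 = decide ((0:ℕ) = 0)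
        rw [show (decide ((0:ℕ) = 0)) = true by simp]
        cases hw0 : w 0
        · exfalso
          rcases hg 0 (by omega) hw0 with h | h | h <;> omega
        · rfl
      · rw [hp (j+1) (by omega)]
        simp
  exact Nat.card_unique

end GridAux4

theorem gridCount_recurrence :
    gridCount 0 = 1 ∧ gridCount 1 = 1 ∧ gridCount 2 = 1 ∧ gridCount 3 = 4 ∧
    gridCount 4 = 6 ∧ gridCount 5 = 10 ∧
    ∀ n : ℕ, 6 ≤ n →
      gridCount n + gridCount (n - 6) =
        gridCount (n - 1) + gridCount (n - 2) + gridCount (n - 4) := by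
  have hval : ∀ m : ℕ, gridCount (m + 2) =
      GridAux.Fc m false false true true + GridAux.Fc m false false true false +
        (GridAux.Fc m false false false true + GridAux.Fc m false false false false) := by
    intro m
    rw [GridAux4.gridCount_eq_gridA, GridAux3.gridA_two]
  refine ⟨?_, ?_, ?_, ?_, ?_, ?_, ?_⟩
  · rw [GridAux4.gridCount_eq_gridA]; exact GridAux4.gridA_zero
  · rw [GridAux4.gridCount_eq_gridA]; exact GridAux4.gridA_one
  · have := hval 0; norm_num at this ⊢; rw [this]; decide
  · have := hval 1; norm_num at this ⊢; rw [this]; decide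
  · have := hval 2; norm_num at this ⊢; rw [this]; decide
  · have := hval 3; norm_num at this ⊢; rw [this]; decide
  · intro n hn
    obtain ⟨m, rfl⟩ : ∃ m, n = m + 6 := ⟨n - 6, by omega⟩
    rcases m with _ | _ | k
    · norm_num
      have h6 := hval 4
      have h5 := hval 3
      have h4 := hval 2
      have h2 := hval 0
      have h0 : gridCount 0 = 1 := by rw [GridAux4.gridCount_eq_gridA]; exact GridAux4.gridA_zero
      norm_num at h6 h5 h4 h2
      rw [h6, h5, h4, h2, h0]
      decide
    · norm_num
      have h7 := hval 5
      have h6 := hval 4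
      have h5 := hval 3
      have h3 := hval 1
      have h1 : gridCount 1 = 1 := by rw [GridAux4.gridCount_eq_gridA]; exact GridAux4.gridA_one
      norm_num at h7 h6 h5 h3
      rw [h7, h6, h5, h3, h1]
      decide
    · have e6 : k + 2 + 6 - 6 = k + 2 := by omega
      have e1 : k + 2 + 6 - 1 = k + 5 + 2 := by omega
      have e2 : k + 2 + 6 - 2 = k + 4 + 2 := by omega
      have e4 : k + 2 + 6 - 4 = k + 2 + 2 := by omega
      have e0 : k + 2 + 6 = k + 6 + 2 := by omega
      rw [e6, e1, e2, e4, e0, hval (k+6), hval (k+5), hval (k+4), hval (k+2), hval k]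
      have r1 := GridAux.Fc_rec k false false true true
      have r2 := GridAux.Fc_rec k false false true false
      have r3 := GridAux.Fc_rec k false false false true
      have r4 := GridAux.Fc_rec k false false false false
      omega
end
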